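/- arXiv:math/0503402 — 5 statements merged into one kernel-verified Lean document; each statement's English description precedes it below -/
import Mathlib

section
/- The bracket [α, β] = Σ_{i=1}^{l} Σ_{j=1}^{m} ⟨α_i, β_j⟩ · (class of D_{i,i}(α) ⊗ D_{j,j}(β)), defined on basis monomials α ∈ V^⊗l, β ∈ V^⊗m and extended bilinearly, descends to a well-defined bilinear map [·,·] : (V^⊗l)_{Z/lZ} × (V^⊗m)_{Z/mZ} → (V^⊗(l+m−2))_{Z/(l+m−2)Z}, i.e. [σ^r(α), β] and [α, σ^s(β)] have the same class as [α, β] for all cyclic shifts σ^r, σ^s; moreover the resulting bracket on L(V) does not depend on the choice of the basis B of V. -/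
/-!
Statement 0: the bracket
`[α, β] = Σᵢ Σⱼ ⟨αᵢ, βⱼ⟩ • class (D_{i,i}(α) ⊗ D_{j,j}(β))`
on basis monomials descends to a well-defined bilinear map on cyclic
coinvariants, and the resulting bracket on `L(V) = ⊕_{l≥2} (V^⊗l)_{ℤ/l}`
does not depend on the choice of basis.
-/

open scoped TensorProduct DirectSum

noncomputable section

variable (K : Type*) [Field K] (V : Type*) [AddCommGroup V] [Module K V]

/-- The `l`-th tensor power of `V`. -/
abbrev TP (l : ℕ) : Type _ := ⨂[K] (_ : Fin l), V

/-- The cyclic shift `σ` (generator of `ℤ/lℤ`) on the `l`-th tensor power: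
it permutes the tensor factors cyclically. -/
def cyc (l : ℕ) : TP K V l ≃ₗ[K] TP K V l :=
  PiTensorProduct.reindex K (fun _ : Fin l => V) (finRotate l)

/-- The submodule of `V^⊗l` spanned by all `σ(t) - t`; quotienting by it gives
the cyclic coinvariants. -/
def cycRel (l : ℕ) : Submodule K (TP K V l) :=
  Submodule.span K {z | ∃ t : TP K V l, z = cyc K V l t - t}

/-- The space `(V^{⊗l})_{ℤ/lℤ}` of cyclic coinvariants. -/
abbrev Coinv (l : ℕ) : Type _ := TP K V l ⧸ cycRel K V l

/-- The class of a tensor in the coinvariants. -/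
def cls {l : ℕ} (t : TP K V l) : Coinv K V l := Submodule.Quotient.mk t

/-- The pure tensor (monomial) `v 0 ⊗ ⋯ ⊗ v (l-1)`. -/
def mono {l : ℕ} (v : Fin l → V) : TP K V l := PiTensorProduct.tprod K v

/-- `L(V) = ⊕_{l ≥ 2} (V^{⊗l})_{ℤ/lℤ}` (the component of index `l` has tensor
degree `l + 2`). -/
abbrev LV : Type _ := ⨁ l : ℕ, Coinv K V (l + 2)

/-- Inclusion of the degree-`(l+2)` component into `L(V)`. -/
def ofL (l : ℕ) : Coinv K V (l + 2) →ₗ[K] LV K V :=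
  DirectSum.lof K ℕ (fun l => Coinv K V (l + 2)) l

/-- The word `D_{i,i}(w) = w_{i+1} ⋯ w_{i-1}` (cyclically, omitting the letter
`w_i`). -/
def dw {ι : Type*} {n : ℕ} (w : Fin (n + 1) → ι) (i : Fin (n + 1)) : Fin n → ι :=
  fun k => w (i + k.succ)

/-- `IsBracket K V B b Br` says that the bilinear map `Br` on `L(V)` is given, on
classes of monomials in the basis `b`, by the formula
`[α, β] = Σᵢ Σⱼ B(αᵢ, βⱼ) • class (D_{i,i}(α) ⊗ D_{j,j}(β))`. -/
def IsBracket {ι : Type*} (B : V →ₗ[K] V →ₗ[K] K) (b : Module.Basis ι K V)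
    (Br : LV K V →ₗ[K] LV K V →ₗ[K] LV K V) : Prop :=
  ∀ (l m : ℕ) (w : Fin (l + 2) → ι) (u : Fin (m + 2) → ι),
    Br (ofL K V l (cls K V (mono K V fun k => b (w k))))
       (ofL K V m (cls K V (mono K V fun k => b (u k)))) =
    ofL K V (l + m) (∑ i : Fin (l + 2), ∑ j : Fin (m + 2),
      B (b (w i)) (b (u j)) •
        cls K V (mono K V fun k : Fin (l + m + 2) =>
          b (Fin.append (dw w i) (dw u j) (Fin.cast (by omega) k))))

def splitEquiv {n : ℕ} (i : Fin (n+1)) : (Fin 1 ⊕ Fin n) ≃ Fin (n+1) :=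
  (finSumFinEquiv.trans (finCongr (by omega))).trans (Equiv.addRight i)

lemma splitEquiv_inl {n : ℕ} (i : Fin (n+1)) (k : Fin 1) :
    splitEquiv i (Sum.inl k) = i := by
  have : k = 0 := Subsingleton.elim _ _
  subst this
  simp [splitEquiv, Fin.ext_iff, Fin.add_def]
  omega

lemma splitEquiv_inr {n : ℕ} (i : Fin (n+1)) (k : Fin n) :
    splitEquiv i (Sum.inr k) = i + k.succ := by
  simp [splitEquiv, Fin.ext_iff, Fin.add_def, Nat.add_comm]

def split {n : ℕ} (i : Fin (n+1)) : TP K V (n+1) ≃ₗ[K] V ⊗[K] TP K V n :=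
  (PiTensorProduct.reindex K (fun _ : Fin (n+1) => V) (splitEquiv i).symm).trans
    ((PiTensorProduct.tmulEquiv K V).symm.trans
      (TensorProduct.congr (PiTensorProduct.subsingletonEquiv (0 : Fin 1))
        (LinearEquiv.refl K _)))

lemma split_mono {n : ℕ} (i : Fin (n+1)) (v : Fin (n+1) → V) :
    split K V i (mono K V v) = v i ⊗ₜ[K] mono K V (fun k => v (i + k.succ)) := by
  simp only [split, mono, LinearEquiv.trans_apply, PiTensorProduct.reindex_tprod,
    Equiv.symm_symm]
  rw [show (PiTensorProduct.tprod K fun k => v (splitEquiv i k)) =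
      PiTensorProduct.tprod K (fun k : Fin 1 ⊕ Fin n => Sum.elim
        (fun s : Fin 1 => v (splitEquiv i (Sum.inl s)))
        (fun s : Fin n => v (splitEquiv i (Sum.inr s))) k) from by
    congr 1; funext k; cases k <;> rfl]
  rw [← PiTensorProduct.tmulEquiv_apply, LinearEquiv.symm_apply_apply]
  simp [TensorProduct.congr, splitEquiv_inl, splitEquiv_inr]

def join {a b c : ℕ} (h : a + b = c) : (TP K V a ⊗[K] TP K V b) ≃ₗ[K] TP K V c :=
  (PiTensorProduct.tmulEquiv K V).trans
    (PiTensorProduct.reindex K (fun _ => V) (finSumFinEquiv.trans (finCongr h)))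

lemma join_mono {a b c : ℕ} (h : a + b = c) (x : Fin a → V) (y : Fin b → V) :
    join K V h (mono K V x ⊗ₜ[K] mono K V y) =
      mono K V (fun k => Fin.append x y (Fin.cast h.symm k)) := by
  simp only [join, mono, LinearEquiv.trans_apply]
  rw [PiTensorProduct.tmulEquiv_apply, PiTensorProduct.reindex_tprod]
  congr 1
  funext k
  simp only [Equiv.symm_trans_apply, finCongr_symm, finCongr_apply]
  generalize Fin.cast h.symm k = j
  induction j using Fin.addCases with
  | left i => simp [Fin.append_left]
  | right i => simp [Fin.append_right]

variable (B : V →ₗ[K] V →ₗ[K] K)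

/-- `J l m s t = cls (join (s ⊗ t))`. -/
def Jmap (l m : ℕ) : TP K V (l+1) →ₗ[K] TP K V (m+1) →ₗ[K] Coinv K V (l+m+2) :=
  TensorProduct.curry ((cycRel K V (l+m+2)).mkQ ∘ₗ
    (join K V (show (l+1)+(m+1) = l+m+2 by omega)).toLinearMap)

def quad (l m : ℕ) :
    V →ₗ[K] TP K V (l+1) →ₗ[K] (V →ₗ[K] TP K V (m+1) →ₗ[K] Coinv K V (l+m+2)) :=
  (LinearMap.smulRightₗ ∘ₗ B).compl₂ (Jmap K V l m)

def bilTT (l m : ℕ) :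
    (V ⊗[K] TP K V (l+1)) →ₗ[K] (V ⊗[K] TP K V (m+1)) →ₗ[K] Coinv K V (l+m+2) :=
  (TensorProduct.lift.equiv (RingHom.id K) V (TP K V (m+1)) (Coinv K V (l+m+2))).toLinearMap ∘ₗ
    TensorProduct.lift (quad K V B l m)

def bil (l m : ℕ) (i : Fin (l+2)) (j : Fin (m+2)) :
    TP K V (l+2) →ₗ[K] TP K V (m+2) →ₗ[K] Coinv K V (l+m+2) :=
  ((bilTT K V B l m) ∘ₗ (split K V (n := l+1) i).toLinearMap).compl₂
    (split K V (n := m+1) j).toLinearMap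

lemma bil_mono (l m : ℕ) (i : Fin (l+2)) (j : Fin (m+2)) (v : Fin (l+2) → V)
    (u : Fin (m+2) → V) :
    bil K V B l m i j (mono K V v) (mono K V u) =
      B (v i) (u j) • cls K V (mono K V (fun k : Fin (l+m+2) =>
        Fin.append (dw v i) (dw u j) (Fin.cast (by omega) k))) := by
  simp only [bil, LinearMap.compl₂_apply, LinearMap.comp_apply, LinearEquiv.coe_coe,
    split_mono, bilTT, bilTT, TensorProduct.lift.tmul, quad, LinearMap.compl₂_apply,
    LinearMap.comp_apply, LinearMap.smulRightₗ_apply, TensorProduct.lift.equiv_apply,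
    LinearMap.smulRight_apply]
  rw [LinearMap.smul_apply]
  congr 1
  simp only [Jmap, TensorProduct.curry_apply, LinearMap.comp_apply, LinearEquiv.coe_coe,
    join_mono]
  rfl

def bilFull (l m : ℕ) : TP K V (l+2) →ₗ[K] TP K V (m+2) →ₗ[K] Coinv K V (l+m+2) :=
  ∑ i : Fin (l+2), ∑ j : Fin (m+2), bil K V B l m i j

lemma bilFull_mono (l m : ℕ) (v : Fin (l+2) → V) (u : Fin (m+2) → V) :
    bilFull K V B l m (mono K V v) (mono K V u) =
      ∑ i : Fin (l+2), ∑ j : Fin (m+2),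
        B (v i) (u j) • cls K V (mono K V (fun k : Fin (l+m+2) =>
          Fin.append (dw v i) (dw u j) (Fin.cast (by omega) k))) := by
  simp [bilFull, LinearMap.sum_apply, bil_mono]

lemma bilFull_cyc_left (l m : ℕ) (x : TP K V (l+2)) :
    bilFull K V B l m (cyc K V (l+2) x) = bilFull K V B l m x := by
  have h : (bilFull K V B l m).comp (cyc K V (l+2)).toLinearMap = bilFull K V B l m := by
    apply PiTensorProduct.ext
    apply MultilinearMap.ext
    intro v
    apply PiTensorProduct.ext
    apply MultilinearMap.ext
    intro u
    simp only [LinearMap.compMultilinearMap_apply, LinearMap.comp_apply, LinearEquiv.coe_coe]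
    rw [show (cyc K V (l+2)) (PiTensorProduct.tprod K v) =
      mono K V (fun k => v ((finRotate (l+2)).symm k)) from PiTensorProduct.reindex_tprod _ _]
    rw [show (PiTensorProduct.tprod K v : TP K V (l+2)) = mono K V v from rfl,
        show (PiTensorProduct.tprod K u : TP K V (m+2)) = mono K V u from rfl]
    rw [bilFull_mono, bilFull_mono]
    refine Fintype.sum_equiv (Equiv.subRight (1 : Fin (l+2))) _ _ (fun i => ?_)
    refine Finset.sum_congr rfl (fun j _ => ?_)
    have h1 : dw (fun k => v ((finRotate (l+2)).symm k)) i = dw v (i - 1) := by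
      funext k
      show v ((finRotate (l+1+1)).symm (i + k.succ)) = _
      rw [finRotate_succ_symm_apply]
      show v (i + k.succ - 1) = v (i - 1 + k.succ)
      rw [sub_add_eq_add_sub]
    rw [h1, finRotate_succ_symm_apply, Equiv.subRight_apply]
  exact DFunLike.congr_fun h x

lemma bilFull_cyc_right (l m : ℕ) (x : TP K V (l+2)) (y : TP K V (m+2)) :
    bilFull K V B l m x (cyc K V (m+2) y) = bilFull K V B l m x y := by
  have h : (bilFull K V B l m).flip.comp (cyc K V (m+2)).toLinearMap
      = (bilFull K V B l m).flip := by
    apply PiTensorProduct.ext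
    apply MultilinearMap.ext
    intro u
    apply PiTensorProduct.ext
    apply MultilinearMap.ext
    intro v
    simp only [LinearMap.compMultilinearMap_apply, LinearMap.comp_apply, LinearEquiv.coe_coe,
      LinearMap.flip_apply]
    rw [show (cyc K V (m+2)) (PiTensorProduct.tprod K u) =
      mono K V (fun k => u ((finRotate (m+2)).symm k)) from PiTensorProduct.reindex_tprod _ _]
    rw [show (PiTensorProduct.tprod K v : TP K V (l+2)) = mono K V v from rfl,
        show (PiTensorProduct.tprod K u : TP K V (m+2)) = mono K V u from rfl]
    rw [bilFull_mono, bilFull_mono]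
    refine Finset.sum_congr rfl (fun i _ => ?_)
    refine Fintype.sum_equiv (Equiv.subRight (1 : Fin (m+2))) _ _ (fun j => ?_)
    have h1 : dw (fun k => u ((finRotate (m+2)).symm k)) j = dw u (j - 1) := by
      funext k
      show u ((finRotate (m+1+1)).symm (j + k.succ)) = _
      rw [finRotate_succ_symm_apply]
      show u (j + k.succ - 1) = u (j - 1 + k.succ)
      rw [sub_add_eq_add_sub]
    rw [h1, finRotate_succ_symm_apply, Equiv.subRight_apply]
  exact DFunLike.congr_fun (DFunLike.congr_fun h y).symm x |>.symm

lemma bilFull_rel_left (l m : ℕ) {z : TP K V (l+2)} (hz : z ∈ cycRel K V (l+2)) :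
    bilFull K V B l m z = 0 := by
  have : cycRel K V (l+2) ≤ LinearMap.ker (bilFull K V B l m) := by
    rw [cycRel, Submodule.span_le]
    rintro _ ⟨t, rfl⟩
    simp only [SetLike.mem_coe, LinearMap.mem_ker, map_sub, bilFull_cyc_left, sub_self]
  exact LinearMap.mem_ker.mp (this hz)

def BrLM (l m : ℕ) : Coinv K V (l+2) →ₗ[K] Coinv K V (m+2) →ₗ[K] Coinv K V (l+m+2) :=
  Submodule.liftQ _ ((Submodule.liftQ _ (bilFull K V B l m).flip
    (by
      rw [cycRel, Submodule.span_le]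
      rintro _ ⟨t, rfl⟩
      simp only [SetLike.mem_coe, LinearMap.mem_ker, map_sub]
      apply LinearMap.ext
      intro x
      simp [LinearMap.flip_apply, bilFull_cyc_right K V B l m x t])).flip)
    (by
      intro z hz
      simp only [LinearMap.mem_ker]
      apply Submodule.linearMap_qext
      apply LinearMap.ext
      intro s
      simp only [LinearMap.comp_apply, Submodule.mkQ_apply, LinearMap.flip_apply,
        Submodule.liftQ_apply, LinearMap.zero_comp, LinearMap.zero_apply]
      rw [bilFull_rel_left K V B l m hz]
      rfl)

lemma BrLM_cls (l m : ℕ) (t : TP K V (l+2)) (s : TP K V (m+2)) :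
    BrLM K V B l m (cls K V t) (cls K V s) = bilFull K V B l m t s := by
  simp [BrLM, cls, Submodule.Quotient.mk]
  rfl

def BrL : LV K V →ₗ[K] LV K V →ₗ[K] LV K V :=
  DirectSum.toModule K ℕ _ (fun l =>
    (DirectSum.toModule K ℕ (Coinv K V (l+2) →ₗ[K] LV K V) (fun m =>
      (LinearMap.llcomp K (Coinv K V (l+2)) (Coinv K V (l+m+2)) (LV K V)
        (ofL K V (l+m))) ∘ₗ (BrLM K V B l m).flip)).flip)

lemma BrL_of (l m : ℕ) (x : Coinv K V (l+2)) (y : Coinv K V (m+2)) :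
    BrL K V B (ofL K V l x) (ofL K V m y) = ofL K V (l+m) (BrLM K V B l m x y) := by
  simp [BrL, ofL, DirectSum.toModule_lof]

lemma BrL_isBracket {ι : Type*} (b : Module.Basis ι K V) : IsBracket K V B b (BrL K V B) := by
  intro l m w u
  rw [BrL_of, BrLM_cls, bilFull_mono]
  congr 1
  refine Finset.sum_congr rfl (fun i _ => Finset.sum_congr rfl (fun j _ => ?_))
  congr 1
  apply congrArg
  apply congrArg
  funext k
  generalize Fin.cast (by omega : l + m + 2 = (l+1)+(m+1)) k = j
  induction j using Fin.addCases with
  | left i' => simp [Fin.append_left]; rfl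
  | right i' => simp [Fin.append_right]; rfl

lemma span_mono_basis {ι : Type*} (b : Module.Basis ι K V) (l : ℕ) :
    Submodule.span K (Set.range fun w : Fin l → ι => mono K V (fun k => b (w k)))
      = (⊤ : Submodule K (TP K V l)) := by
  rw [eq_top_iff, ← PiTensorProduct.span_tprod_eq_top, Submodule.span_le]
  rintro _ ⟨v, rfl⟩
  set W := Submodule.span K (Set.range fun w : Fin l → ι => mono K V (fun k => b (w k)))
  have hW : (W.mkQ).compMultilinearMap (PiTensorProduct.tprod K) = 0 := by
    apply Module.Basis.ext_multilinear (fun _ => b)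
    intro w
    simp only [LinearMap.compMultilinearMap_apply, MultilinearMap.zero_apply,
      Submodule.mkQ_apply, Submodule.Quotient.mk_eq_zero]
    exact Submodule.subset_span ⟨w, rfl⟩
  have := DFunLike.congr_fun hW v
  simp only [LinearMap.compMultilinearMap_apply, MultilinearMap.zero_apply,
    Submodule.mkQ_apply, Submodule.Quotient.mk_eq_zero] at this
  exact this

lemma quotExtAux {M N : Type*} [AddCommGroup M] [Module K M] [AddCommMonoid N] [Module K N]
    (p : Submodule K M) ⦃f g : M ⧸ p →ₗ[K] N⦄ (h : f ∘ₗ p.mkQ = g ∘ₗ p.mkQ) : f = g :=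
  LinearMap.ext fun x => Submodule.Quotient.induction_on _ x (LinearMap.congr_fun h)

lemma eq_of_isBracket {ι : Type*} (b : Module.Basis ι K V)
    (Br : LV K V →ₗ[K] LV K V →ₗ[K] LV K V) (h : IsBracket K V B b Br) :
    Br = BrL K V B := by
  apply DirectSum.linearMap_ext
  intro l
  apply quotExtAux K (cycRel K V (l+2))
  apply LinearMap.ext_on (span_mono_basis K V b (l+2))
  rintro _ ⟨w, rfl⟩
  simp only [LinearMap.comp_apply, Submodule.mkQ_apply]
  apply DirectSum.linearMap_ext
  intro m
  apply quotExtAux K (cycRel K V (m+2))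
  apply LinearMap.ext_on (span_mono_basis K V b (m+2))
  rintro _ ⟨u, rfl⟩
  simp only [LinearMap.comp_apply, Submodule.mkQ_apply]
  have h1 := h l m w u
  have h2 := BrL_isBracket K V B b l m w u
  rw [show Submodule.Quotient.mk (mono K V fun k => b (w k))
      = cls K V (mono K V fun k => b (w k)) from rfl,
    show Submodule.Quotient.mk (mono K V fun k => b (u k))
      = cls K V (mono K V fun k => b (u k)) from rfl]
  show Br (DirectSum.lof K ℕ _ l _) (DirectSum.lof K ℕ _ m _)
    = BrL K V B (DirectSum.lof K ℕ _ l _) (DirectSum.lof K ℕ _ m _)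
  rw [show ∀ x, DirectSum.lof K ℕ (fun l => Coinv K V (l+2)) l x = ofL K V l x from fun _ => rfl,
    show ∀ x, DirectSum.lof K ℕ (fun l => Coinv K V (l+2)) m x = ofL K V m x from fun _ => rfl,
    h1, h2]

/-- The bracket descends to a well-defined bilinear map on the
cyclic coinvariants (existence of `Br` as above; in particular the formula is
compatible with all cyclic shifts of `α` and `β`), and the resulting bracket on
`L(V)` does not depend on the choice of the basis. -/
theorem bracket_well_defined_and_basis_independent
    {ι : Type*} (B : V →ₗ[K] V →ₗ[K] K) (hB : ∀ v : V, B v v = 0)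
    (b : Module.Basis ι K V) :
    (∃ Br : LV K V →ₗ[K] LV K V →ₗ[K] LV K V, IsBracket K V B b Br) ∧
    (∀ (ι' : Type*) (b' : Module.Basis ι' K V)
       (Br Br' : LV K V →ₗ[K] LV K V →ₗ[K] LV K V),
       IsBracket K V B b Br → IsBracket K V B b' Br' → Br = Br') := by
  constructor
  · exact ⟨BrL K V B, BrL_isBracket K V B b⟩
  · intro ι' b' Br Br' h h'
    rw [eq_of_isBracket K V B b Br h, eq_of_isBracket K V B b' Br' h']

end
end

section
/- The graded vector space L(V) = ⊕_{l≥2} (V^⊗l)_{Z/lZ}, equipped with the bracket [α, β] = Σ_{i=1}^{l} Σ_{j=1}^{m} ⟨α_i, β_j⟩ · (class of D_{i,i}(α) ⊗ D_{j,j}(β)) on monomials extended bilinearly, is a Lie algebra over K: the bracket is bilinear, antisymmetric (with [x,x] = 0), and satisfies the Jacobi identity [α,[β,γ]] + [β,[γ,α]] + [γ,[α,β]] = 0. -/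
/-!
Statement 0: the bracket
`[α, β] = Σᵢ Σⱼ ⟨αᵢ, βⱼ⟩ • class (D_{i,i}(α) ⊗ D_{j,j}(β))`
on basis monomials descends to a well-defined bilinear map on cyclic
coinvariants, and the resulting bracket on `L(V) = ⊕_{l≥2} (V^⊗l)_{ℤ/l}`
does not depend on the choice of basis.
-/

open scoped TensorProduct DirectSum

noncomputable section

variable (K : Type*) [Field K] (V : Type*) [AddCommGroup V] [Module K V]

section Aux
variable {K : Type*} [Field K] {V : Type*} [AddCommGroup V] [Module K V]
open scoped Fin.NatCast Fin.CommRing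

lemma cls_cyc {n : ℕ} (t : TP K V n) : cls K V (cyc K V n t) = cls K V t := by
  rw [cls, cls, Submodule.Quotient.eq]
  exact Submodule.subset_span ⟨t, rfl⟩

lemma cls_rot {n : ℕ} (v : Fin (n + 1) → V) :
    cls K V (mono K V (fun x => v (x + 1))) = cls K V (mono K V v) := by
  have h : cyc K V (n+1) (mono K V (fun x => v (x + 1))) = mono K V v := by
    rw [mono, cyc, PiTensorProduct.reindex_tprod]
    congr 1
    funext i
    congr 1
    have : (finRotate (n+1)) ((finRotate (n+1)).symm i) = i := Equiv.apply_symm_apply _ _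
    rw [finRotate_succ_apply] at this
    exact this
  rw [← h, cls_cyc]

lemma cls_rot_pow {n : ℕ} (d : ℕ) : ∀ (v : Fin (n + 1) → V),
    cls K V (mono K V (fun x => v (x + (d : Fin (n+1))))) = cls K V (mono K V v) := by
  induction d with
  | zero => intro v; simp
  | succ d ih =>
      intro v
      have : (fun x : Fin (n+1) => v (x + ((d+1 : ℕ) : Fin (n+1)))) =
          (fun x : Fin (n+1) => (fun y => v (y + 1)) (x + (d : Fin (n+1)))) := by
        funext x
        congr 1
        push_cast
        ring
      rw [this, ih (fun y => v (y + 1))]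
      exact cls_rot v

lemma cls_eq_of_rot {n : ℕ} (v v' : Fin (n + 1) → V) (d : ℕ)
    (h : ∀ x, v' x = v (x + (d : Fin (n+1)))) :
    cls K V (mono K V v') = cls K V (mono K V v) := by
  have : v' = fun x => v (x + (d : Fin (n+1))) := funext h
  rw [this, cls_rot_pow]


def tpCast {n n' : ℕ} (h : n = n') : TP K V n →ₗ[K] TP K V n' :=
  (PiTensorProduct.reindex K (fun _ : Fin n => V) (finCongr h)).toLinearMap

lemma tpCast_mono {n n' : ℕ} (h : n = n') (v : Fin n → V) :
    tpCast (K := K) (V := V) h (mono K V v) = mono K V (fun x => v (Fin.cast h.symm x)) := by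
  subst h
  rw [tpCast, mono]
  simp [PiTensorProduct.reindex_refl]
  rfl

lemma tpCast_cyc {n n' : ℕ} (h : n = n') (t : TP K V n) :
    tpCast (K := K) (V := V) h (cyc K V n t) = cyc K V n' (tpCast (K := K) (V := V) h t) := by
  subst h
  simp [tpCast, finCongr_refl, PiTensorProduct.reindex_refl]

def coinvCast {n n' : ℕ} (h : n = n') : Coinv K V n →ₗ[K] Coinv K V n' :=
  Submodule.mapQ _ _ (tpCast (K := K) (V := V) h) (by
    rw [cycRel, Submodule.span_le]
    rintro z ⟨t, rfl⟩
    simp only [SetLike.mem_coe, Submodule.mem_comap, map_sub, tpCast_cyc]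
    exact Submodule.subset_span ⟨_, rfl⟩)

lemma coinvCast_cls {n n' : ℕ} (h : n = n') (t : TP K V n) :
    coinvCast (K := K) (V := V) h (cls K V t) = cls K V (tpCast (K := K) (V := V) h t) :=
  rfl

lemma coinvCast_cls_mono {n n' : ℕ} (h : n = n') (v : Fin n → V) :
    coinvCast (K := K) (V := V) h (cls K V (mono K V v)) =
      cls K V (mono K V (fun x => v (Fin.cast h.symm x))) := by
  rw [coinvCast_cls, tpCast_mono]

lemma ofL_coinvCast {n n' : ℕ} (h : n = n') (h2 : n + 2 = n' + 2) (x : Coinv K V (n + 2)) :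
    ofL K V n' (coinvCast (K := K) (V := V) h2 x) = ofL K V n x := by
  subst h
  congr 1
  obtain ⟨t, rfl⟩ := Submodule.Quotient.mk_surjective _ x
  rw [show (Submodule.Quotient.mk t : Coinv K V (n+2)) = cls K V t from rfl, coinvCast_cls]
  congr 1
  rw [show h2 = rfl from rfl]
  simp [tpCast, finCongr_refl, PiTensorProduct.reindex_refl]


variable {ι : Type*} (b : Module.Basis ι K V)

/-- generator: class of a basis monomial, included into `L(V)`. -/
def gen (l : ℕ) (w : Fin (l + 2) → ι) : LV K V :=
  ofL K V l (cls K V (mono K V fun k => b (w k)))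

lemma mono_mem_span (n : ℕ) (v : Fin n → V) :
    mono K V v ∈ Submodule.span K
      {x : TP K V n | ∃ w : Fin n → ι, x = mono K V (fun k => b (w k))} := by
  have hv : ∀ i, v i = ∑ j ∈ (b.repr (v i)).support, (b.repr (v i)) j • b j := by
    intro i
    conv_lhs => rw [← b.linearCombination_repr (v i)]
    rw [Finsupp.linearCombination_apply, Finsupp.sum]
  have expand : mono K V v =
      ∑ r ∈ Fintype.piFinset (fun i => (b.repr (v i)).support),
        (∏ i, (b.repr (v i)) (r i)) • mono K V (fun i => b (r i)) := by
    rw [mono]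
    conv_lhs => rw [funext hv]
    rw [MultilinearMap.map_sum_finset (PiTensorProduct.tprod K)
      (fun i j => (b.repr (v i)) j • b j) (fun i => (b.repr (v i)).support)]
    refine Finset.sum_congr rfl fun r _ => ?_
    rw [MultilinearMap.map_smul_univ]
    rfl
  rw [expand]
  exact Submodule.sum_mem _ fun r _ =>
    Submodule.smul_mem _ _ (Submodule.subset_span ⟨r, rfl⟩)

lemma span_gen_top :
    Submodule.span K {x : LV K V | ∃ (l : ℕ) (w : Fin (l + 2) → ι), x = gen b l w} = ⊤ := by
  rw [Submodule.eq_top_iff']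
  intro x
  refine DirectSum.induction_on x (Submodule.zero_mem _) ?_ (fun a c ha hc => Submodule.add_mem _ ha hc)
  intro l y
  rw [← DirectSum.lof_eq_of K]
  obtain ⟨t, rfl⟩ := Submodule.Quotient.mk_surjective _ y
  have ht : t ∈ Submodule.span K
      {z : TP K V (l+2) | ∃ w : Fin (l+2) → ι, z = mono K V (fun k => b (w k))} := by
    have : t ∈ (⊤ : Submodule K (TP K V (l+2))) := trivial
    rw [← PiTensorProduct.span_tprod_eq_top] at this
    refine Submodule.span_le.mpr ?_ this
    rintro z ⟨f, rfl⟩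
    exact mono_mem_span b (l+2) f
  refine Submodule.span_induction (p := fun z _ =>
      (DirectSum.lof K ℕ (fun l => Coinv K V (l + 2)) l (Submodule.Quotient.mk z) : LV K V) ∈
        Submodule.span K {x : LV K V | ∃ (l : ℕ) (w : Fin (l + 2) → ι), x = gen b l w})
    ?_ ?_ ?_ ?_ ht
  · rintro z ⟨w, rfl⟩
    exact Submodule.subset_span ⟨l, w, rfl⟩
  · simp only [Submodule.Quotient.mk_zero, map_zero]
    exact Submodule.zero_mem _
  · intro p q _ _ hp hq
    rw [show (Submodule.Quotient.mk (p + q) : Coinv K V (l+2)) =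
      Submodule.Quotient.mk p + Submodule.Quotient.mk q from rfl, map_add]
    exact Submodule.add_mem _ hp hq
  · intro a p _ hp
    rw [show (Submodule.Quotient.mk (a • p) : Coinv K V (l+2)) =
      a • Submodule.Quotient.mk p from rfl, map_smul]
    exact Submodule.smul_mem _ _ hp


lemma gen_cast {N N' : ℕ} (h : N = N') (f : Fin (N + 2) → ι) :
    gen b N f = gen b N' (fun x => f (Fin.cast (by omega : N' + 2 = N + 2) x)) := by
  subst h; rfl

lemma gen_rot {N : ℕ} (f g : Fin (N + 2) → ι) (d : ℕ)
    (h : ∀ x, g x = f (x + (d : Fin (N + 2)))) : gen b N g = gen b N f := by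
  unfold gen
  congr 1
  exact cls_eq_of_rot (n := N + 1) _ _ d (fun x => by rw [h x])

variable (B : V →ₗ[K] V →ₗ[K] K) (Br : LV K V →ₗ[K] LV K V →ₗ[K] LV K V)

lemma br_gen (hBr : IsBracket K V B b Br) (l m : ℕ) (w : Fin (l + 2) → ι) (u : Fin (m + 2) → ι) :
    Br (gen b l w) (gen b m u) = ∑ i : Fin (l + 2), ∑ j : Fin (m + 2),
      (B (b (w i)) (b (u j))) •
        gen b (l + m) (fun k : Fin (l + m + 2) =>
          Fin.append (dw w i) (dw u j) (Fin.cast (by omega) k)) := by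
  calc Br (gen b l w) (gen b m u)
      = ofL K V (l + m) (∑ i : Fin (l + 2), ∑ j : Fin (m + 2),
          B (b (w i)) (b (u j)) • cls K V (mono K V fun k : Fin (l + m + 2) =>
            b (Fin.append (dw w i) (dw u j) (Fin.cast (by omega) k)))) := hBr l m w u
    _ = _ := by
        rw [map_sum]
        refine Finset.sum_congr rfl fun i _ => ?_
        rw [map_sum]
        refine Finset.sum_congr rfl fun j _ => ?_
        rw [map_smul]
        rfl

lemma br_br (hBr : IsBracket K V B b Br) (l m n : ℕ) (w : Fin (l + 2) → ι)
    (u : Fin (m + 2) → ι) (t : Fin (n + 2) → ι) :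
    Br (gen b l w) (Br (gen b m u) (gen b n t)) =
      ∑ j : Fin (m + 2), ∑ k : Fin (n + 2),
        B (b (u j)) (b (t k)) •
          ∑ i : Fin (l + 2), ∑ p : Fin (m + n + 2),
            (B (b (w i)) (b ((fun x : Fin (m + n + 2) =>
                Fin.append (dw u j) (dw t k) (Fin.cast (by omega) x)) p))) •
              gen b (l + (m + n)) (fun k' : Fin (l + (m + n) + 2) =>
                Fin.append (dw w i)
                  (dw (fun x : Fin (m + n + 2) =>
                    Fin.append (dw u j) (dw t k) (Fin.cast (by omega) x)) p)
                  (Fin.cast (by omega) k')) := by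
  rw [br_gen b B Br hBr m n u t, map_sum]
  refine Finset.sum_congr rfl fun j _ => ?_
  rw [map_sum]
  refine Finset.sum_congr rfl fun k _ => ?_
  rw [map_smul]
  congr 1
  exact br_gen b B Br hBr l (m + n) w _


lemma sum_split {a c : ℕ} {M : Type*} [AddCommMonoid M] (F : Fin (a + c + 2) → M) :
    ∑ p, F p = (∑ s : Fin (a + 1), F (Fin.cast (by omega) (Fin.castAdd (c + 1) s))) +
      ∑ s : Fin (c + 1), F (Fin.cast (by omega) (Fin.natAdd (a + 1) s)) := by
  rw [← (finCongr (show (a+1)+(c+1) = a + c + 2 by omega)).sum_comp F, Fin.sum_univ_add]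
  rfl

lemma mod2' (x M : ℕ) (h : x < 2 * M) :
    x % M = x ∧ x < M ∨ x % M = x - M ∧ M ≤ x := by
  rcases Nat.lt_or_ge x M with h' | h'
  · exact Or.inl ⟨Nat.mod_eq_of_lt h', h'⟩
  · refine Or.inr ⟨?_, h'⟩
    rw [Nat.mod_eq_sub_mod h', Nat.mod_eq_of_lt (by omega)]

lemma mod_eq_mod_of {a a' M : ℕ} (h : a = a' ∨ a = a' + M ∨ a' = a + M) : a % M = a' % M := by
  rcases h with rfl | rfl | rfl
  · rfl
  · rw [Nat.add_mod_right]
  · rw [Nat.add_mod_right]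

lemma append_apply {nn mm : ℕ} {X : Sort*} (a : Fin nn → X) (c : Fin mm → X)
    (x : Fin (nn + mm)) :
    Fin.append a c x = if h : (x : ℕ) < nn then a ⟨x, h⟩ else c ⟨x - nn, by omega⟩ := by
  split
  · conv_lhs => rw [show x = Fin.castAdd mm ⟨x, ‹_›⟩ from Fin.ext rfl]
    rw [Fin.append_left]
  · conv_lhs => rw [show x = Fin.natAdd nn ⟨x - nn, by omega⟩ from Fin.ext (by simp; omega)]
    rw [Fin.append_right]

lemma gen_rot_cast {N N' : ℕ} (h : N = N') (f : Fin (N + 2) → ι) (g : Fin (N' + 2) → ι)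
    (d : ℕ) (hfg : ∀ x : Fin (N' + 2), g x = f (Fin.cast (by omega) (x + (d : Fin (N' + 2))))) :
    gen b N' g = gen b N f := by
  subst h
  exact gen_rot b f g d hfg

lemma B_anti (hB : ∀ v : V, B v v = 0) (x y : V) : B x y = - B y x := by
  have h := hB (x + y)
  simp only [map_add, LinearMap.add_apply, hB] at h
  linear_combination h

lemma LV_neg_smul (a : K) (g : LV K V) : -a • g = -(a • g) :=
  eq_neg_of_add_eq_zero_left (by rw [← add_smul, neg_add_cancel, zero_smul])

lemma LV_sum_neg {α : Type*} [Fintype α] (f : α → LV K V) : ∑ x, -f x = -∑ x, f x :=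
  eq_neg_of_add_eq_zero_left (by rw [← Finset.sum_add_distrib]; simp only [neg_add_cancel, Finset.sum_const_zero])

lemma LV_neg_neg_smul (a : K) (g : LV K V) : a • g = -(-a • g) :=
  eq_neg_of_add_eq_zero_left (by rw [← add_smul, add_neg_cancel, zero_smul])

def JW (da db dc : ℕ) (α : Fin (da + 2) → ι) (β : Fin (db + 2) → ι) (γ : Fin (dc + 2) → ι)
    (i : Fin (da + 2)) (j : Fin (db + 2)) (k : Fin (dc + 2)) (p : Fin (db + dc + 2)) :
    Fin (da + (db + dc) + 2) → ι :=
  fun x => Fin.append (dw α i)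
    (dw (fun y => Fin.append (dw β j) (dw γ k) (Fin.cast (by omega) y)) p)
    (Fin.cast (by omega) x)

lemma JW_apply (da db dc : ℕ) (α : Fin (da + 2) → ι) (β : Fin (db + 2) → ι)
    (γ : Fin (dc + 2) → ι) (i : Fin (da + 2)) (j : Fin (db + 2)) (k : Fin (dc + 2))
    (p : Fin (db + dc + 2)) (x : Fin (da + (db + dc) + 2)) :
    JW da db dc α β γ i j k p x =
      if (x : ℕ) < da + 1 then
        α ⟨(i.val + (x.val + 1)) % (da + 2), Nat.mod_lt _ (by omega)⟩
      else if (p.val + ((x.val - (da + 1)) + 1)) % (db + dc + 2) < db + 1 then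
        β ⟨(j.val + ((p.val + ((x.val - (da + 1)) + 1)) % (db + dc + 2) + 1)) % (db + 2),
          Nat.mod_lt _ (by omega)⟩
      else
        γ ⟨(k.val + (((p.val + ((x.val - (da + 1)) + 1)) % (db + dc + 2) - (db + 1)) + 1)) % (dc + 2),
          Nat.mod_lt _ (by omega)⟩ := by
  rw [JW, append_apply]
  simp only [Fin.coe_cast]
  split
  · rfl
  · rw [show (dw (fun y => Fin.append (dw β j) (dw γ k) (Fin.cast (by omega) y)) p
        ⟨(x : ℕ) - (da + 1), by omega⟩ : ι) =
      Fin.append (dw β j) (dw γ k)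
        (Fin.cast (by omega) (p + Fin.succ ⟨(x : ℕ) - (da + 1), by omega⟩)) from rfl,
      append_apply]
    simp only [Fin.coe_cast, Fin.add_def, Fin.val_succ]
    split
    · rfl
    · rfl

lemma JW_rot (da db dc : ℕ) (α : Fin (da + 2) → ι) (β : Fin (db + 2) → ι)
    (γ : Fin (dc + 2) → ι) (i : Fin (da + 2)) (j : Fin (db + 2)) (k : Fin (dc + 2))
    (s : Fin (db + 1)) (x : Fin (dc + (da + db) + 2)) :
    JW dc da db γ α β k i (j + s.succ) (Fin.cast (by omega) (Fin.natAdd (da + 1) s.rev)) x =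
    JW da db dc α β γ i j k (Fin.cast (by omega) (Fin.castAdd (dc + 1) s))
      (Fin.cast (by omega)
        (x + ((da + 1 + (db - s.val) : ℕ) : Fin (dc + (da + db) + 2)))) := by
  rw [JW_apply, JW_apply]
  simp only [Fin.coe_cast, Fin.coe_natAdd, Fin.coe_castAdd, Fin.add_def, Fin.val_succ,
    Fin.val_rev, Fin.val_natCast]
  simp only [Nat.mod_eq_of_lt (show da + 1 + (db - (s : ℕ)) < dc + (da + db) + 2 by omega)]
  have hXlt : ((x : ℕ) + (da + 1 + (db - (s : ℕ)))) % (dc + (da + db) + 2) <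
      dc + (da + db) + 2 := Nat.mod_lt _ (by omega)
  have hX := mod2' ((x : ℕ) + (da + 1 + (db - (s : ℕ)))) (dc + (da + db) + 2) (by omega)
  have hZ1 := mod2' ((s : ℕ) +
    (((x : ℕ) + (da + 1 + (db - (s : ℕ)))) % (dc + (da + db) + 2) - (da + 1) + 1))
    (db + dc + 2) (by omega)
  have hZ2 := mod2' (da + 1 + (db + 1 - ((s : ℕ) + 1)) + ((x : ℕ) - (dc + 1) + 1))
    (da + db + 2) (by omega)
  have hxx := x.isLt
  have hss := s.isLt
  have hii := i.isLt
  have hjj := j.isLt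
  have hkk := k.isLt
  rcases hX with ⟨hX1, hX2⟩ | ⟨hX1, hX2⟩ <;>
    rcases hZ1 with ⟨hZ11, hZ12⟩ | ⟨hZ11, hZ12⟩ <;>
      rcases hZ2 with ⟨hZ21, hZ22⟩ | ⟨hZ21, hZ22⟩ <;>
        split_ifs <;>
          first
            | (exfalso; omega)
            | (apply congrArg; apply Fin.ext; simp only [Nat.mod_add_mod];
                exact mod_eq_mod_of (by omega))

lemma append_dw_left {db dc : ℕ} (β : Fin (db + 2) → ι) (γ : Fin (dc + 2) → ι)
    (j : Fin (db + 2)) (k : Fin (dc + 2)) (s : Fin (db + 1)) (x : Fin (db + 1 + (dc + 1)))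
    (hx : (x : ℕ) = (s : ℕ)) :
    Fin.append (dw β j) (dw γ k) x = β (j + s.succ) := by
  have hs := s.isLt
  rw [append_apply, dif_pos (show (x : ℕ) < db + 1 by omega)]
  simp only [dw]
  apply congrArg
  apply Fin.ext
  simp only [Fin.add_def, Fin.val_succ]
  exact mod_eq_mod_of (Or.inl (by omega))

lemma append_dw_right {db dc : ℕ} (β : Fin (db + 2) → ι) (γ : Fin (dc + 2) → ι)
    (j : Fin (db + 2)) (k : Fin (dc + 2)) (s : Fin (dc + 1)) (x : Fin (db + 1 + (dc + 1)))
    (hx : (x : ℕ) = db + 1 + (s : ℕ)) :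
    Fin.append (dw β j) (dw γ k) x = γ (k + s.succ) := by
  rw [append_apply, dif_neg (show ¬((x : ℕ) < db + 1) by omega)]
  simp only [dw]
  apply congrArg
  apply Fin.ext
  simp only [Fin.add_def, Fin.val_succ]
  exact mod_eq_mod_of (Or.inl (by omega))

def TJ (da db dc : ℕ) (α : Fin (da + 2) → ι) (β : Fin (db + 2) → ι) (γ : Fin (dc + 2) → ι)
    (j : Fin (db + 2)) (k : Fin (dc + 2)) (i : Fin (da + 2)) (p : Fin (db + dc + 2)) :
    LV K V :=
  ((B (b (β j))) (b (γ k)) *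
      (B (b (α i))) (b (Fin.append (dw β j) (dw γ k) (Fin.cast (by omega) p)))) •
    gen b (da + (db + dc)) (JW da db dc α β γ i j k p)

lemma key_term (hB : ∀ v : V, B v v = 0) (da db dc : ℕ) (α : Fin (da + 2) → ι)
    (β : Fin (db + 2) → ι) (γ : Fin (dc + 2) → ι) (j : Fin (db + 2)) (k : Fin (dc + 2))
    (i : Fin (da + 2)) (s : Fin (db + 1)) :
    TJ b B da db dc α β γ j k i (Fin.cast (by omega) (Fin.castAdd (dc + 1) s)) =
      - TJ b B dc da db γ α β i (j + s.succ) k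
          (Fin.cast (by omega) (Fin.natAdd (da + 1) s.rev)) := by
  rw [TJ, TJ]
  rw [append_dw_left β γ j k s _ (by simp),
    append_dw_right α β i (j + s.succ) s.rev _ (by simp)]
  have hg : gen b (dc + (da + db)) (JW dc da db γ α β k i (j + s.succ)
      (Fin.cast (by omega) (Fin.natAdd (da + 1) s.rev))) =
      gen b (da + (db + dc)) (JW da db dc α β γ i j k
        (Fin.cast (by omega) (Fin.castAdd (dc + 1) s))) :=
    gen_rot_cast b (by omega) _ _ (da + 1 + (db - s.val)) (JW_rot da db dc α β γ i j k s)
  rw [hg]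
  rw [show β (j + s.succ + (s.rev).succ) = β j from ?_]
  · rw [B_anti B hB (b (γ k)) (b (β j)), mul_neg, ← LV_neg_neg_smul, mul_comm]
  · apply congrArg
    apply Fin.ext
    simp only [Fin.add_def, Fin.val_succ, Fin.val_rev]
    rw [Nat.mod_add_mod]
    have hj := j.isLt
    have hs := s.isLt
    rw [show (j : ℕ) + ((s : ℕ) + 1) + (db + 1 - ((s : ℕ) + 1) + 1) = (j : ℕ) + (db + 2) by omega,
      Nat.add_mod_right, Nat.mod_eq_of_lt hj]

lemma br_br' (hBr : IsBracket K V B b Br) (l m n : ℕ) (w : Fin (l + 2) → ι)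
    (u : Fin (m + 2) → ι) (t : Fin (n + 2) → ι) :
    Br (gen b l w) (Br (gen b m u) (gen b n t)) =
      ∑ j : Fin (m + 2), ∑ k : Fin (n + 2), ∑ i : Fin (l + 2), ∑ p : Fin (m + n + 2),
        TJ b B l m n w u t j k i p := by
  rw [br_br b B Br hBr l m n w u t]
  simp only [Finset.smul_sum, smul_smul]
  rfl

lemma TJ_split (da db dc : ℕ) (α : Fin (da + 2) → ι) (β : Fin (db + 2) → ι)
    (γ : Fin (dc + 2) → ι) :
    (∑ j : Fin (db + 2), ∑ k : Fin (dc + 2), ∑ i : Fin (da + 2), ∑ p : Fin (db + dc + 2),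
      TJ b B da db dc α β γ j k i p) =
    (∑ q : Fin (db + 2) × Fin (dc + 2) × Fin (da + 2) × Fin (db + 1),
      TJ b B da db dc α β γ q.1 q.2.1 q.2.2.1
        (Fin.cast (by omega) (Fin.castAdd (dc + 1) q.2.2.2))) +
    (∑ q : Fin (db + 2) × Fin (dc + 2) × Fin (da + 2) × Fin (dc + 1),
      TJ b B da db dc α β γ q.1 q.2.1 q.2.2.1
        (Fin.cast (by omega) (Fin.natAdd (db + 1) q.2.2.2))) := by
  simp only [sum_split]
  simp only [Finset.sum_add_distrib]
  simp only [Fintype.sum_prod_type]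

lemma key_sum (hB : ∀ v : V, B v v = 0) (da db dc : ℕ) (α : Fin (da + 2) → ι)
    (β : Fin (db + 2) → ι) (γ : Fin (dc + 2) → ι) :
    (∑ q : Fin (db + 2) × Fin (dc + 2) × Fin (da + 2) × Fin (db + 1),
      TJ b B da db dc α β γ q.1 q.2.1 q.2.2.1
        (Fin.cast (by omega) (Fin.castAdd (dc + 1) q.2.2.2))) =
    - ∑ q : Fin (da + 2) × Fin (db + 2) × Fin (dc + 2) × Fin (db + 1),
      TJ b B dc da db γ α β q.1 q.2.1 q.2.2.1
        (Fin.cast (by omega) (Fin.natAdd (da + 1) q.2.2.2)) := by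
  rw [← LV_sum_neg]
  refine Fintype.sum_equiv
    ⟨fun q => (q.2.2.1, q.1 + q.2.2.2.succ, q.2.1, q.2.2.2.rev),
     fun q => (q.2.1 - q.2.2.2.rev.succ, q.2.2.1, q.1, q.2.2.2.rev),
     ?_, ?_⟩ _ _ ?_
  · rintro ⟨j, k, i, s⟩
    simp [Fin.rev_rev, add_sub_cancel_right]
  · rintro ⟨a, c, e, r⟩
    simp [Fin.rev_rev, sub_add_cancel]
  · rintro ⟨j, k, i, s⟩
    exact key_term b B hB da db dc α β γ j k i s

lemma app2_rot (l m : ℕ) (w : Fin (l + 2) → ι) (u : Fin (m + 2) → ι)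
    (i : Fin (l + 2)) (j : Fin (m + 2)) (x : Fin (m + l + 2)) :
    (fun k : Fin (m + l + 2) => Fin.append (dw u j) (dw w i) (Fin.cast (by omega) k)) x =
    (fun k : Fin (l + m + 2) => Fin.append (dw w i) (dw u j) (Fin.cast (by omega) k))
      (Fin.cast (by omega) (x + (((l + 1) : ℕ) : Fin (m + l + 2)))) := by
  simp only []
  rw [append_apply, append_apply]
  simp only [Fin.coe_cast, Fin.add_def, Fin.val_natCast]
  simp only [Nat.mod_eq_of_lt (show l + 1 < m + l + 2 by omega)]
  have hX := mod2' ((x : ℕ) + (l + 1)) (m + l + 2) (by omega)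
  have hxx := x.isLt
  have hii := i.isLt
  have hjj := j.isLt
  rcases hX with ⟨hX1, hX2⟩ | ⟨hX1, hX2⟩ <;>
    split_ifs <;>
      first
        | (exfalso; omega)
        | (simp only [dw]; apply congrArg; apply Fin.ext;
            simp only [Fin.add_def, Fin.val_succ]; exact mod_eq_mod_of (by omega))

lemma TA_term (hB : ∀ v : V, B v v = 0) (l m : ℕ) (w : Fin (l + 2) → ι) (u : Fin (m + 2) → ι)
    (i : Fin (l + 2)) (j : Fin (m + 2)) :
    (B (b (w i))) (b (u j)) • gen b (l + m)
        (fun k : Fin (l + m + 2) => Fin.append (dw w i) (dw u j) (Fin.cast (by omega) k)) =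
    - ((B (b (u j))) (b (w i)) • gen b (m + l)
        (fun k : Fin (m + l + 2) => Fin.append (dw u j) (dw w i) (Fin.cast (by omega) k))) := by
  have hg := gen_rot_cast b (show l + m = m + l by omega)
    (fun k : Fin (l + m + 2) => Fin.append (dw w i) (dw u j) (Fin.cast (by omega) k))
    (fun k : Fin (m + l + 2) => Fin.append (dw u j) (dw w i) (Fin.cast (by omega) k))
    (l + 1) (app2_rot l m w u i j)
  rw [hg, B_anti B hB (b (u j)) (b (w i)), ← LV_neg_neg_smul]

lemma antisym_gen (hB : ∀ v : V, B v v = 0) (hBr : IsBracket K V B b Br) (l m : ℕ)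
    (w : Fin (l + 2) → ι) (u : Fin (m + 2) → ι) :
    Br (gen b l w) (gen b m u) = - Br (gen b m u) (gen b l w) := by
  rw [br_gen b B Br hBr l m w u, br_gen b B Br hBr m l u w]
  rw [← Fintype.sum_prod_type', ← Fintype.sum_prod_type', ← LV_sum_neg]
  refine Fintype.sum_equiv (Equiv.prodComm _ _) _ _ ?_
  rintro ⟨i, j⟩
  exact TA_term b B hB l m w u i j

lemma brxx_gen (hB : ∀ v : V, B v v = 0) (hBr : IsBracket K V B b Br) (l : ℕ)
    (w : Fin (l + 2) → ι) :
    Br (gen b l w) (gen b l w) = 0 := by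
  rw [br_gen b B Br hBr l l w w, ← Fintype.sum_prod_type']
  refine Finset.sum_involution (fun q _ => Prod.swap q) ?_ ?_ (fun q _ => Finset.mem_univ _) ?_
  · rintro ⟨i, j⟩ _
    have h := TA_term b B hB l l w w i j
    rw [h]
    exact neg_add_cancel _
  · rintro ⟨i, j⟩ _ hne hq
    apply hne
    simp only [Prod.swap_prod_mk, Prod.mk.injEq] at hq
    obtain ⟨rfl, -⟩ := hq
    rw [hB, zero_smul]
  · rintro ⟨i, j⟩ _
    rfl

lemma jacobi_gen (hB : ∀ v : V, B v v = 0) (hBr : IsBracket K V B b Br) (l m n : ℕ) (w : Fin (l + 2) → ι)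
    (u : Fin (m + 2) → ι) (t : Fin (n + 2) → ι) :
    Br (gen b l w) (Br (gen b m u) (gen b n t)) +
    Br (gen b m u) (Br (gen b n t) (gen b l w)) +
    Br (gen b n t) (Br (gen b l w) (gen b m u)) = 0 := by
  rw [br_br' b B Br hBr l m n w u t, br_br' b B Br hBr m n l u t w,
    br_br' b B Br hBr n l m t w u]
  rw [TJ_split b B l m n w u t, TJ_split b B m n l u t w, TJ_split b B n l m t w u]
  rw [key_sum b B hB l m n w u t, key_sum b B hB m n l u t w, key_sum b B hB n l m t w u]
  abel

end Aux

/-- `L(V) = ⊕_{l≥2} (V^{⊗l})_{ℤ/lℤ}`, equipped with the bracket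
`[α, β] = Σᵢ Σⱼ ⟨αᵢ, βⱼ⟩ • class (D_{i,i}(α) ⊗ D_{j,j}(β))` (on monomials,
extended bilinearly), is a Lie algebra over `K`: the bracket is bilinear,
antisymmetric (with `[x, x] = 0`), and satisfies the Jacobi identity. -/
theorem LV_isLieAlgebra
    {ι : Type*} (B : V →ₗ[K] V →ₗ[K] K) (hB : ∀ v : V, B v v = 0)
    (b : Module.Basis ι K V)
    (Br : LV K V →ₗ[K] LV K V →ₗ[K] LV K V) (hBr : IsBracket K V B b Br) :
    (∀ x : LV K V, Br x x = 0) ∧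
    (∀ x y : LV K V, Br x y = - Br y x) ∧
    (∀ x y z : LV K V, Br x (Br y z) + Br y (Br z x) + Br z (Br x y) = 0) := by

  have hS : ∀ v : LV K V, v ∈ Submodule.span K
      {x : LV K V | ∃ (l : ℕ) (w : Fin (l + 2) → ι), x = gen b l w} := by
    intro v
    rw [span_gen_top b]
    trivial
  have base2 : ∀ (l : ℕ) (w : Fin (l + 2) → ι) (y : LV K V),
      Br (gen b l w) y + Br y (gen b l w) = 0 := by
    intro l w y
    refine Submodule.span_induction ?_ ?_ ?_ ?_ (hS y)
    · rintro _ ⟨m, u, rfl⟩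
      rw [antisym_gen b B Br hB hBr l m w u]
      exact neg_add_cancel _
    · simp
    · intro p q _ _ hp hq
      simp only [map_add, LinearMap.add_apply]
      calc _ = (Br (gen b l w) p + Br p (gen b l w)) +
            (Br (gen b l w) q + Br q (gen b l w)) := by abel
        _ = 0 := by rw [hp, hq, add_zero]
    · intro a p _ hp
      simp only [map_smul, LinearMap.smul_apply]
      rw [← smul_add, hp, smul_zero]
  have anti : ∀ x y : LV K V, Br x y + Br y x = 0 := by
    intro x y
    refine Submodule.span_induction ?_ ?_ ?_ ?_ (hS x)
    · rintro _ ⟨l, w, rfl⟩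
      exact base2 l w y
    · simp
    · intro p q _ _ hp hq
      simp only [map_add, LinearMap.add_apply]
      calc _ = (Br p y + Br y p) + (Br q y + Br y q) := by abel
        _ = 0 := by rw [hp, hq, add_zero]
    · intro a p _ hp
      simp only [map_smul, LinearMap.smul_apply]
      rw [← smul_add, hp, smul_zero]
  have sq : ∀ x : LV K V, Br x x = 0 := by
    intro x
    refine Submodule.span_induction ?_ ?_ ?_ ?_ (hS x)
    · rintro _ ⟨l, w, rfl⟩
      exact brxx_gen b B Br hB hBr l w
    · simp
    · intro p q _ _ hp hq
      simp only [map_add, LinearMap.add_apply]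
      calc _ = Br p p + Br q q + (Br p q + Br q p) := by abel
        _ = 0 := by rw [hp, hq, anti p q]; simp
    · intro a p _ hp
      simp only [map_smul, LinearMap.smul_apply]
      rw [hp, smul_zero, smul_zero]
  have jac3 : ∀ (l : ℕ) (w : Fin (l + 2) → ι) (m : ℕ) (u : Fin (m + 2) → ι) (z : LV K V),
      Br (gen b l w) (Br (gen b m u) z) + Br (gen b m u) (Br z (gen b l w)) +
        Br z (Br (gen b l w) (gen b m u)) = 0 := by
    intro l w m u z
    refine Submodule.span_induction ?_ ?_ ?_ ?_ (hS z)
    · rintro _ ⟨n, t, rfl⟩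
      exact jacobi_gen b B Br hB hBr l m n w u t
    · simp
    · intro p q _ _ hp hq
      simp only [map_add, LinearMap.add_apply]
      calc _ = (Br (gen b l w) (Br (gen b m u) p) + Br (gen b m u) (Br p (gen b l w)) +
              Br p (Br (gen b l w) (gen b m u))) +
            (Br (gen b l w) (Br (gen b m u) q) + Br (gen b m u) (Br q (gen b l w)) +
              Br q (Br (gen b l w) (gen b m u))) := by abel
        _ = 0 := by rw [hp, hq, add_zero]
    · intro a p _ hp
      simp only [map_smul, LinearMap.smul_apply]
      rw [← smul_add, ← smul_add, hp, smul_zero]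
  have jac2 : ∀ (l : ℕ) (w : Fin (l + 2) → ι) (y z : LV K V),
      Br (gen b l w) (Br y z) + Br y (Br z (gen b l w)) + Br z (Br (gen b l w) y) = 0 := by
    intro l w y z
    refine Submodule.span_induction ?_ ?_ ?_ ?_ (hS y)
    · rintro _ ⟨m, u, rfl⟩
      exact jac3 l w m u z
    · simp
    · intro p q _ _ hp hq
      simp only [map_add, LinearMap.add_apply]
      calc _ = (Br (gen b l w) (Br p z) + Br p (Br z (gen b l w)) +
              Br z (Br (gen b l w) p)) +
            (Br (gen b l w) (Br q z) + Br q (Br z (gen b l w)) +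
              Br z (Br (gen b l w) q)) := by abel
        _ = 0 := by rw [hp, hq, add_zero]
    · intro a p _ hp
      simp only [map_smul, LinearMap.smul_apply]
      rw [← smul_add, ← smul_add, hp, smul_zero]
  have jac : ∀ x y z : LV K V, Br x (Br y z) + Br y (Br z x) + Br z (Br x y) = 0 := by
    intro x y z
    refine Submodule.span_induction ?_ ?_ ?_ ?_ (hS x)
    · rintro _ ⟨l, w, rfl⟩
      exact jac2 l w y z
    · simp
    · intro p q _ _ hp hq
      simp only [map_add, LinearMap.add_apply]
      calc _ = (Br p (Br y z) + Br y (Br z p) + Br z (Br p y)) +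
            (Br q (Br y z) + Br y (Br z q) + Br z (Br q y)) := by abel
        _ = 0 := by rw [hp, hq, add_zero]
    · intro a p _ hp
      simp only [map_smul, LinearMap.smul_apply]
      rw [← smul_add, ← smul_add, hp, smul_zero]
  exact ⟨sq, fun x y => eq_neg_of_add_eq_zero_left (anti x y), jac⟩

end
end

section
/- If φ : V → W is a K-linear map between vector spaces with alternating bilinear forms such that ⟨φ(α), φ(β)⟩_W = ⟨α, β⟩_V for all α, β ∈ V, then the map L(φ) : L(V) → L(W) induced by α₁⊗⋯⊗α_l ↦ φ(α₁)⊗⋯⊗φ(α_l) on each (V^⊗l)_{Z/lZ} is a homomorphism of Lie algebras. -/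
/-!
Statement 0: the bracket
`[α, β] = Σᵢ Σⱼ ⟨αᵢ, βⱼ⟩ • class (D_{i,i}(α) ⊗ D_{j,j}(β))`
on basis monomials descends to a well-defined bilinear map on cyclic
coinvariants, and the resulting bracket on `L(V) = ⊕_{l≥2} (V^⊗l)_{ℤ/l}`
does not depend on the choice of basis.
-/

open scoped TensorProduct DirectSum

noncomputable section

variable (K : Type*) [Field K] (V : Type*) [AddCommGroup V] [Module K V]

/-- `IsInducedMap K V W φ F` says that `F : L(V) → L(W)` is induced by
`α₁ ⊗ ⋯ ⊗ α_l ↦ φ(α₁) ⊗ ⋯ ⊗ φ(α_l)` on each `(V^{⊗l})_{ℤ/lℤ}`. -/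
def IsInducedMap (W : Type*) [AddCommGroup W] [Module K W] (φ : V →ₗ[K] W)
    (F : LV K V →ₗ[K] LV K W) : Prop :=
  ∀ (l : ℕ) (v : Fin (l + 2) → V),
    F (ofL K V l (cls K V (mono K V v))) =
    ofL K W l (cls K W (mono K W fun k => φ (v k)))

-- ===== combinatorial lemmas (already checked) =====
section Comb
variable {α β : Type*} {n : ℕ}

theorem append_comp {m n : ℕ} (g : α → β) (a : Fin m → α) (b : Fin n → α) :
    (fun k => g (Fin.append a b k)) = Fin.append (fun k => g (a k)) (fun k => g (b k)) := by
  funext q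
  refine Fin.addCases (fun q1 => ?_) (fun q2 => ?_) q <;> simp

theorem dw_update_self (w : Fin (n + 1) → α) (i : Fin (n + 1)) (x : α) :
    dw (Function.update w i x) i = dw w i := by
  funext q
  refine Function.update_of_ne ?_ _ _
  intro h
  exact Fin.succ_ne_zero q (by rwa [add_eq_left] at h)

theorem dw_update_ne (w : Fin (n + 1) → α) {i k : Fin (n + 1)} (h : k ≠ i) (x : α) :
    ∃ p : Fin n, (∀ z, dw (Function.update w k z) i = Function.update (dw w i) p z) ∧
      i + p.succ = k := by
  refine ⟨(k - i).pred (sub_ne_zero.mpr h), ?_, ?_⟩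
  · intro z
    have hp : i + ((k - i).pred (sub_ne_zero.mpr h)).succ = k := by
      rw [Fin.succ_pred]; exact add_sub_cancel _ _
    funext q
    by_cases hq : q = (k - i).pred (sub_ne_zero.mpr h)
    · subst hq
      rw [Function.update_self]
      show Function.update w k z (i + _) = z
      rw [hp, Function.update_self]
    · rw [Function.update_of_ne hq]
      show Function.update w k z (i + q.succ) = w (i + q.succ)
      refine Function.update_of_ne (fun hc => hq ?_) _ _
      have : q.succ = ((k - i).pred (sub_ne_zero.mpr h)).succ := by
        apply add_left_cancel (a := i); rw [hc, hp]
      exact Fin.succ_injective _ this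
  · rw [Fin.succ_pred]; exact add_sub_cancel _ _

theorem append_update_left {m n : ℕ} (a : Fin m → α) (b : Fin n → α) (p : Fin m) (x : α) :
    Fin.append (Function.update a p x) b =
      Function.update (Fin.append a b) (Fin.castAdd n p) x := by
  funext q
  refine Fin.addCases (fun q1 => ?_) (fun q2 => ?_) q
  · rw [Fin.append_left, Function.update_apply, Function.update_apply]
    have : (Fin.castAdd n q1 = Fin.castAdd n p) ↔ q1 = p := by
      simp [Fin.ext_iff]
    rw [if_congr this rfl rfl]
    split <;> simp_all [Fin.append_left]
  · rw [Fin.append_right, Function.update_of_ne, Fin.append_right]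
    simp [Fin.ext_iff]
    omega

theorem append_update_right {m n : ℕ} (a : Fin m → α) (b : Fin n → α) (p : Fin n) (x : α) :
    Fin.append a (Function.update b p x) =
      Function.update (Fin.append a b) (Fin.natAdd m p) x := by
  funext q
  refine Fin.addCases (fun q1 => ?_) (fun q2 => ?_) q
  · rw [Fin.append_left, Function.update_of_ne, Fin.append_left]
    simp [Fin.ext_iff]; omega
  · rw [Fin.append_right, Function.update_apply, Function.update_apply]
    have : (Fin.natAdd m q2 = Fin.natAdd m p) ↔ q2 = p := by simp [Fin.ext_iff]
    rw [if_congr this rfl rfl]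
    split <;> simp_all [Fin.append_right]

def lettersF {l m : ℕ} (u : Fin (l + 2) → α) (v : Fin (m + 2) → α)
    (i : Fin (l + 2)) (j : Fin (m + 2)) : Fin (l + m + 2) → α :=
  fun k => Fin.append (dw u i) (dw v j) (Fin.cast (by omega) k)

theorem lettersF_comp {l m : ℕ} (g : α → β) (u : Fin (l + 2) → α) (v : Fin (m + 2) → α)
    (i : Fin (l + 2)) (j : Fin (m + 2)) :
    lettersF (fun k => g (u k)) (fun k => g (v k)) i j = fun k => g (lettersF u v i j k) := by
  funext q
  exact (congrFun (append_comp g (dw u i) (dw v j)) (Fin.cast (by omega) q)).symm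

theorem lettersF_update_left_self {l m : ℕ} (u : Fin (l + 2) → α) (v : Fin (m + 2) → α)
    (i : Fin (l + 2)) (j : Fin (m + 2)) (x : α) :
    lettersF (Function.update u i x) v i j = lettersF u v i j := by
  funext q; show Fin.append (dw (Function.update u i x) i) _ _ = _
  rw [dw_update_self]; rfl

theorem lettersF_update_right_self {l m : ℕ} (u : Fin (l + 2) → α) (v : Fin (m + 2) → α)
    (i : Fin (l + 2)) (j : Fin (m + 2)) (x : α) :
    lettersF u (Function.update v j x) i j = lettersF u v i j := by
  funext q; show Fin.append _ (dw (Function.update v j x) j) _ = _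
  rw [dw_update_self]; rfl

theorem lettersF_update_left {l m : ℕ} (u : Fin (l + 2) → α) (v : Fin (m + 2) → α)
    {i k : Fin (l + 2)} (j : Fin (m + 2)) (h : k ≠ i) :
    ∃ P : Fin (l + m + 2), ∀ z,
      lettersF (Function.update u k z) v i j = Function.update (lettersF u v i j) P z := by
  obtain ⟨p, hp, -⟩ := dw_update_ne u h (u 0)
  have hc : l + m + 2 = l + 1 + (m + 1) := by omega
  have hinj : Function.Injective (Fin.cast hc) := fun a b hab => by
    simpa [Fin.ext_iff] using hab
  refine ⟨Fin.cast hc.symm (Fin.castAdd (m + 1) p), fun z => ?_⟩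
  funext q
  show Fin.append (dw (Function.update u k z) i) (dw v j) (Fin.cast (by omega) q) = _
  rw [hp z, append_update_left,
    show Fin.castAdd (m + 1) p = Fin.cast hc (Fin.cast hc.symm (Fin.castAdd (m + 1) p)) from
      by simp [Fin.ext_iff]]
  exact congrFun (Function.update_comp_eq_of_injective
    (Fin.append (dw u i) (dw v j)) hinj (Fin.cast hc.symm (Fin.castAdd (m + 1) p)) z) q

theorem lettersF_update_right {l m : ℕ} (u : Fin (l + 2) → α) (v : Fin (m + 2) → α)
    (i : Fin (l + 2)) {j k : Fin (m + 2)} (h : k ≠ j) :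
    ∃ P : Fin (l + m + 2), ∀ z,
      lettersF u (Function.update v k z) i j = Function.update (lettersF u v i j) P z := by
  obtain ⟨p, hp, -⟩ := dw_update_ne v h (v 0)
  have hc : l + m + 2 = l + 1 + (m + 1) := by omega
  have hinj : Function.Injective (Fin.cast hc) := fun a b hab => by
    simpa [Fin.ext_iff] using hab
  refine ⟨Fin.cast hc.symm (Fin.natAdd (l + 1) p), fun z => ?_⟩
  funext q
  show Fin.append (dw u i) (dw (Function.update v k z) j) (Fin.cast (by omega) q) = _
  rw [hp z, append_update_right,
    show Fin.natAdd (l + 1) p = Fin.cast hc (Fin.cast hc.symm (Fin.natAdd (l + 1) p)) from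
      by simp [Fin.ext_iff]]
  exact congrFun (Function.update_comp_eq_of_injective
    (Fin.append (dw u i) (dw v j)) hinj (Fin.cast hc.symm (Fin.natAdd (l + 1) p)) z) q

end Comb

-- ===== algebraic lemmas =====

theorem cls_add {l : ℕ} (a b : TP K V l) : cls K V (a + b) = cls K V a + cls K V b := rfl

theorem mono_update_add {l : ℕ} (v : Fin l → V) (i : Fin l) (x y : V) :
    mono K V (Function.update v i (x + y)) =
      mono K V (Function.update v i x) + mono K V (Function.update v i y) :=
  MultilinearMap.map_update_add (PiTensorProduct.tprod K) v i x y

theorem mono_update_smul {l : ℕ} (v : Fin l → V) (i : Fin l) (c : K) (x : V) :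
    mono K V (Function.update v i (c • x)) = c • mono K V (Function.update v i x) :=
  MultilinearMap.map_update_smul (PiTensorProduct.tprod K) v i c x

theorem cls_smul {l : ℕ} (c : K) (a : TP K V l) : cls K V (c • a) = c • cls K V a := rfl

/-- The monomial class map as a multilinear map. -/
def monoML (l : ℕ) : MultilinearMap K (fun _ : Fin (l + 2) => V) (LV K V) :=
  (ofL K V l ∘ₗ (cycRel K V (l + 2)).mkQ).compMultilinearMap (PiTensorProduct.tprod K)

theorem monoML_apply (l : ℕ) (v : Fin (l + 2) → V) :
    monoML K V l v = ofL K V l (cls K V (mono K V v)) := rfl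

/-- The bracket formula, as a multilinear map in the second monomial. -/
def brMR (B : V →ₗ[K] V →ₗ[K] K) (l m : ℕ) (u : Fin (l + 2) → V) :
    MultilinearMap K (fun _ : Fin (m + 2) => V) (LV K V) where
  toFun v := ofL K V (l + m) (∑ i : Fin (l + 2), ∑ j : Fin (m + 2),
      B (u i) (v j) • cls K V (mono K V (lettersF u v i j)))
  map_update_add' := by
    intro dec v k x y
    obtain rfl : dec = instDecidableEqFin _ := Subsingleton.elim _ _
    rw [← (ofL K V (l + m)).map_add]
    refine congrArg _ ?_
    rw [← Finset.sum_add_distrib]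
    refine Finset.sum_congr rfl fun i _ => ?_
    rw [← Finset.sum_add_distrib]
    refine Finset.sum_congr rfl fun j _ => ?_
    by_cases h : j = k
    · subst h
      rw [lettersF_update_right_self, lettersF_update_right_self, lettersF_update_right_self,
        Function.update_self, Function.update_self, Function.update_self, map_add, add_smul]
    · obtain ⟨P, hP⟩ := lettersF_update_right u v i (Ne.symm h)
      rw [hP, hP, hP, Function.update_of_ne h, Function.update_of_ne h,
        Function.update_of_ne h, mono_update_add, cls_add, smul_add]
  map_update_smul' := by
    intro dec v k c x
    obtain rfl : dec = instDecidableEqFin _ := Subsingleton.elim _ _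
    rw [← (ofL K V (l + m)).map_smul, Finset.smul_sum]
    refine congrArg _ ?_
    refine Finset.sum_congr rfl fun i _ => ?_
    rw [Finset.smul_sum]
    refine Finset.sum_congr rfl fun j _ => ?_
    by_cases h : j = k
    · subst h
      rw [lettersF_update_right_self, lettersF_update_right_self,
        Function.update_self, Function.update_self, map_smul, smul_eq_mul, mul_smul]
    · obtain ⟨P, hP⟩ := lettersF_update_right u v i (Ne.symm h)
      rw [hP, hP, Function.update_of_ne h, Function.update_of_ne h,
        mono_update_smul, cls_smul, smul_comm]

/-- The bracket formula, as a multilinear map in the first monomial. -/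
def brML (B : V →ₗ[K] V →ₗ[K] K) (l m : ℕ) (v : Fin (m + 2) → V) :
    MultilinearMap K (fun _ : Fin (l + 2) => V) (LV K V) where
  toFun u := ofL K V (l + m) (∑ i : Fin (l + 2), ∑ j : Fin (m + 2),
      B (u i) (v j) • cls K V (mono K V (lettersF u v i j)))
  map_update_add' := by
    intro dec u k x y
    obtain rfl : dec = instDecidableEqFin _ := Subsingleton.elim _ _
    rw [← (ofL K V (l + m)).map_add]
    refine congrArg _ ?_
    rw [← Finset.sum_add_distrib]
    refine Finset.sum_congr rfl fun i _ => ?_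
    by_cases h : i = k
    · subst h
      rw [← Finset.sum_add_distrib]
      refine Finset.sum_congr rfl fun j _ => ?_
      rw [lettersF_update_left_self, lettersF_update_left_self, lettersF_update_left_self,
        Function.update_self, Function.update_self, Function.update_self, map_add,
        LinearMap.add_apply, add_smul]
    · rw [← Finset.sum_add_distrib]
      refine Finset.sum_congr rfl fun j _ => ?_
      obtain ⟨P, hP⟩ := lettersF_update_left u v j (Ne.symm h)
      rw [hP, hP, hP, Function.update_of_ne h, Function.update_of_ne h,
        Function.update_of_ne h, mono_update_add, cls_add, smul_add]
  map_update_smul' := by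
    intro dec u k c x
    obtain rfl : dec = instDecidableEqFin _ := Subsingleton.elim _ _
    rw [← (ofL K V (l + m)).map_smul, Finset.smul_sum]
    refine congrArg _ ?_
    refine Finset.sum_congr rfl fun i _ => ?_
    rw [Finset.smul_sum]
    refine Finset.sum_congr rfl fun j _ => ?_
    by_cases h : i = k
    · subst h
      rw [lettersF_update_left_self, lettersF_update_left_self,
        Function.update_self, Function.update_self, map_smul,
        LinearMap.smul_apply, smul_eq_mul, mul_smul]
    · obtain ⟨P, hP⟩ := lettersF_update_left u v j (Ne.symm h)
      rw [hP, hP, Function.update_of_ne h, Function.update_of_ne h,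
        mono_update_smul, cls_smul, smul_comm]

/-- **Basis independence**: the bracket formula holds on arbitrary monomials. -/
theorem bracket_mono {ι' : Type*} (B : V →ₗ[K] V →ₗ[K] K) (e : Module.Basis ι' K V)
    (Br : LV K V →ₗ[K] LV K V →ₗ[K] LV K V) (hBr : IsBracket K V B e Br)
    {l m : ℕ} (u : Fin (l + 2) → V) (v : Fin (m + 2) → V) :
    Br (ofL K V l (cls K V (mono K V u))) (ofL K V m (cls K V (mono K V v))) =
    ofL K V (l + m) (∑ i : Fin (l + 2), ∑ j : Fin (m + 2),
      B (u i) (v j) • cls K V (mono K V (lettersF u v i j))) := by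
  have stepA : ∀ (w : Fin (l + 2) → ι') (v : Fin (m + 2) → V),
      Br (ofL K V l (cls K V (mono K V fun k => e (w k))))
        (ofL K V m (cls K V (mono K V v))) = brMR K V B l m (fun k => e (w k)) v := by
    intro w v
    have hml : (Br (ofL K V l (cls K V (mono K V fun k => e (w k))))).compMultilinearMap
        (monoML K V m) = brMR K V B l m (fun k => e (w k)) := by
      refine Module.Basis.ext_multilinear (fun _ => e) fun r => ?_
      simp only [LinearMap.compMultilinearMap_apply, monoML_apply]
      rw [hBr l m w r]
      show _ = ofL K V (l + m) _
      congr 1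
      refine Finset.sum_congr rfl fun i _ => Finset.sum_congr rfl fun j _ => ?_
      rw [lettersF_comp]
      rfl
    exact DFunLike.congr_fun hml v
  have hml2 : (Br.flip (ofL K V m (cls K V (mono K V v)))).compMultilinearMap
      (monoML K V l) = brML K V B l m v := by
    refine Module.Basis.ext_multilinear (fun _ => e) fun w => ?_
    simp only [LinearMap.compMultilinearMap_apply, monoML_apply, LinearMap.flip_apply]
    exact stepA w v
  exact DFunLike.congr_fun hml2 u

section Induced
variable (W : Type*) [AddCommGroup W] [Module K W] (φ : V →ₗ[K] W)

theorem cycRel_le_comap (l : ℕ) :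
    cycRel K V l ≤ (cycRel K W l).comap (PiTensorProduct.map fun _ : Fin l => φ) := by
  rw [cycRel, Submodule.span_le]
  rintro z ⟨t, rfl⟩
  show (PiTensorProduct.map fun _ : Fin l => φ) (cyc K V l t - t) ∈ cycRel K W l
  rw [map_sub]
  have hc : (PiTensorProduct.map fun _ : Fin l => φ) (cyc K V l t) =
      cyc K W l ((PiTensorProduct.map fun _ : Fin l => φ) t) :=
    PiTensorProduct.map_reindex (fun _ => φ) (finRotate l) t
  rw [hc]
  exact Submodule.subset_span ⟨_, rfl⟩

/-- The induced map on coinvariants. -/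
def coinvMap (l : ℕ) : Coinv K V l →ₗ[K] Coinv K W l :=
  Submodule.mapQ _ _ (PiTensorProduct.map fun _ : Fin l => φ) (cycRel_le_comap K V W φ l)

/-- The induced map `L(φ) : L(V) → L(W)`. -/
def indF : LV K V →ₗ[K] LV K W :=
  DirectSum.toModule K ℕ (LV K W) fun l => (ofL K W l).comp (coinvMap K V W φ (l + 2))

theorem indF_isInduced : IsInducedMap K V W φ (indF K V W φ) := by
  intro l v
  show DirectSum.toModule K ℕ (LV K W) _ (DirectSum.lof K ℕ _ l _) = _
  rw [DirectSum.toModule_lof]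
  have : coinvMap K V W φ (l + 2) (cls K V (mono K V v)) =
      cls K W (mono K W fun k => φ (v k)) := by
    show Submodule.mapQ _ _ _ _ (Submodule.Quotient.mk _) = _
    rw [Submodule.mapQ_apply]
    unfold mono
    rw [PiTensorProduct.map_tprod]
    rfl
  rw [LinearMap.comp_apply, this]

theorem mem_span_monos (x : LV K V) :
    x ∈ Submodule.span K
      {z : LV K V | ∃ (l : ℕ) (v : Fin (l + 2) → V), z = ofL K V l (cls K V (mono K V v))} := by
  induction x using DirectSum.induction_on with
  | zero => exact zero_mem _
  | of l y =>
    obtain ⟨t, rfl⟩ := Submodule.mkQ_surjective (cycRel K V (l + 2)) y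
    have h2 : Submodule.span K (Set.range (PiTensorProduct.tprod K
          (s := fun _ : Fin (l + 2) => V))) ≤
        Submodule.comap ((ofL K V l) ∘ₗ (cycRel K V (l + 2)).mkQ)
          (Submodule.span K {z : LV K V |
            ∃ (l : ℕ) (v : Fin (l + 2) → V), z = ofL K V l (cls K V (mono K V v))}) := by
      rw [Submodule.span_le]
      rintro z ⟨v, rfl⟩
      exact Submodule.subset_span ⟨l, v, rfl⟩
    have h1 : t ∈ Submodule.span K (Set.range (PiTensorProduct.tprod K
        (s := fun _ : Fin (l + 2) => V))) := by
      rw [PiTensorProduct.span_tprod_eq_top]; trivial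
    exact h2 h1
  | add a c ha hc => exact add_mem ha hc

end Induced

/-- If `φ : V → W` satisfies `⟨φ(α), φ(β)⟩_W = ⟨α, β⟩_V` for all
`α, β ∈ V`, then the induced map `L(φ) : L(V) → L(W)` exists (is well defined)
and is a homomorphism of Lie algebras. -/
theorem inducedMap_isLieHom
    {W : Type*} [AddCommGroup W] [Module K W]
    (BV : V →ₗ[K] V →ₗ[K] K) (hBV : ∀ v : V, BV v v = 0)
    (BW : W →ₗ[K] W →ₗ[K] K) (hBW : ∀ w : W, BW w w = 0)
    {ι κ : Type*} (b : Module.Basis ι K V) (b' : Module.Basis κ K W)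
    (BrV : LV K V →ₗ[K] LV K V →ₗ[K] LV K V) (hBrV : IsBracket K V BV b BrV)
    (BrW : LV K W →ₗ[K] LV K W →ₗ[K] LV K W) (hBrW : IsBracket K W BW b' BrW)
    (φ : V →ₗ[K] W) (hφ : ∀ α β : V, BW (φ α) (φ β) = BV α β) :
    (∃ F : LV K V →ₗ[K] LV K W, IsInducedMap K V W φ F) ∧
    (∀ F : LV K V →ₗ[K] LV K W, IsInducedMap K V W φ F →
      ∀ x y : LV K V, F (BrV x y) = BrW (F x) (F y)) := by
  constructor
  · exact ⟨indF K V W φ, indF_isInduced K V W φ⟩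
  · intro F hF
    have key : ∀ (l m : ℕ) (u : Fin (l + 2) → V) (v : Fin (m + 2) → V),
        F (BrV (ofL K V l (cls K V (mono K V u))) (ofL K V m (cls K V (mono K V v)))) =
        BrW (F (ofL K V l (cls K V (mono K V u))))
            (F (ofL K V m (cls K V (mono K V v)))) := by
      intro l m u v
      rw [hF l u, hF m v, bracket_mono K V BV b BrV hBrV u v,
        bracket_mono K W BW b' BrW hBrW (fun k => φ (u k)) (fun k => φ (v k))]
      simp only [map_sum, map_smul]
      refine Finset.sum_congr rfl fun i _ => Finset.sum_congr rfl fun j _ => ?_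
      rw [hφ, hF (l + m) (lettersF u v i j), lettersF_comp]
    have main : ∀ x ∈ Submodule.span K
          {z : LV K V | ∃ (l : ℕ) (v : Fin (l + 2) → V), z = ofL K V l (cls K V (mono K V v))},
        ∀ y ∈ Submodule.span K
          {z : LV K V | ∃ (l : ℕ) (v : Fin (l + 2) → V), z = ofL K V l (cls K V (mono K V v))},
        F (BrV x y) = BrW (F x) (F y) := by
      intro x hx
      refine Submodule.span_induction ?_ ?_ ?_ ?_ hx
      · rintro z ⟨l, u, rfl⟩ y hy
        refine Submodule.span_induction ?_ ?_ ?_ ?_ hy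
        · rintro z' ⟨m, v, rfl⟩
          exact key l m u v
        · simp
        · intro a c _ _ ha hc
          simp only [map_add, ha, hc]
        · intro r a _ ha
          simp only [map_smul, ha]
      · intro y hy
        simp
      · intro a c _ _ ha hc y hy
        simp only [map_add, LinearMap.add_apply, ha y hy, hc y hy]
      · intro r a _ ha y hy
        simp only [map_smul, LinearMap.smul_apply, ha y hy]
    intro x y
    exact main x (mem_span_monos K V x) y (mem_span_monos K V y)

end
end

section
/- Let A be an associative K-algebra and let α ∈ V^⊗l. Write N(α) = x p_α − y q_α, where N(α) = Σ_{r=0}^{l−1} σ^r(α) is the trace of the cyclic action applied to α and p_α, q_α ∈ V^⊗(l−1). Then for all X, Y ∈ A, in the algebra A[ε] of dual numbers one has [X − ε q_α(X,Y), Y − ε p_α(X,Y)] = [X, Y]; that is, the vector field F_α(X,Y) = (X − ε q_α(X,Y), Y − ε p_α(X,Y)) on A × A is tangent to the fibers of the commutator map (X,Y) ↦ [X,Y]. -/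
/-!
We identify the `l`-th tensor power `V^{⊗l}` of a vector space `V` with a
distinguished basis indexed by `ι` with the space of noncommutative homogeneous
polynomials of degree `l` in the variables `ι`, i.e. with formal `K`-linear
combinations of words of length `l` in the alphabet `ι`.
-/

noncomputable section

/-- Homogeneous noncommutative polynomials of degree `l` in variables `ι`
(the `l`-th tensor power of the vector space with basis `ι`). -/
abbrev PolyH (K : Type*) [Field K] (ι : Type*) (l : ℕ) : Type _ := (Fin l → ι) →₀ K

variable {K : Type*} [Field K] {ι : Type*}

/-- The cyclic shift `σ` (generator of `ℤ/lℤ`), permuting tensor factors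
cyclically: `α₁ ⊗ α₂ ⊗ ⋯ ⊗ α_l ↦ α₂ ⊗ ⋯ ⊗ α_l ⊗ α₁`. -/
def rotP {l : ℕ} : PolyH K ι l →ₗ[K] PolyH K ι l :=
  Finsupp.lmapDomain K K fun w => w ∘ finRotate l

/-- Reversal of tensor factors: `α₁ ⊗ ⋯ ⊗ α_l ↦ α_l ⊗ ⋯ ⊗ α₁`
(the unsigned involution `I`). -/
def revP {l : ℕ} : PolyH K ι l →ₗ[K] PolyH K ι l :=
  Finsupp.lmapDomain K K fun w => w ∘ Fin.rev

/-- The involution `ι(α₁ ⊗ ⋯ ⊗ α_l) = (-1)^l · α_l ⊗ ⋯ ⊗ α₁`. -/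
def iotaP {l : ℕ} : PolyH K ι l →ₗ[K] PolyH K ι l :=
  ((-1 : K) ^ l) • revP

/-- `x_i ⊗ (-)` : prepend the letter `i`, `p ↦ x_i ⊗ p`. -/
def consP (i : ι) {l : ℕ} : PolyH K ι l →ₗ[K] PolyH K ι (l + 1) :=
  Finsupp.lmapDomain K K fun w => Fin.cons i w

/-- `(-) ⊗ x_i` : append the letter `i`, `p ↦ p ⊗ x_i`. -/
def snocP (i : ι) {l : ℕ} : PolyH K ι l →ₗ[K] PolyH K ι (l + 1) :=
  Finsupp.lmapDomain K K fun w => Fin.snoc w i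

/-- The trace `N = Σ_{r=0}^{l-1} σ^r` of the cyclic action on `V^{⊗l}`. -/
def NP {l : ℕ} : PolyH K ι l →ₗ[K] PolyH K ι l :=
  ∑ r ∈ Finset.range l, (rotP : Module.End K (PolyH K ι l)) ^ r

/-- Evaluation of a noncommutative homogeneous polynomial at the tuple `X`
of elements of an associative `K`-algebra `A`. -/
def evalP {l : ℕ} {A : Type*} [Ring A] [Algebra K A] (X : ι → A)
    (p : PolyH K ι l) : A :=
  p.sum fun w c => c • (List.ofFn fun k => X (w k)).prod

/-- The word `D_{i,i}(w) = w_{i+1} ⋯ w_{i-1}` (cyclically, omitting the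
letter `w_i`). -/
def dwP {n : ℕ} (w : Fin (n + 1) → ι) (i : Fin (n + 1)) : Fin n → ι :=
  fun k => w (i + k.succ)


section AuxEval
variable {A : Type*} [Ring A] [Algebra K A]

lemma evalP_eq {l : ℕ} (X : ι → A) (p : PolyH K ι l) :
    evalP X p = Finsupp.linearCombination K
      (fun w : Fin l → ι => (List.ofFn fun k => X (w k)).prod) p := rfl

lemma evalP_sub {l : ℕ} (X : ι → A) (p q : PolyH K ι l) :
    evalP X (p - q) = evalP X p - evalP X q := by
  simp [evalP_eq]

lemma evalP_mapDomain {l l' : ℕ} (X : ι → A) (f : (Fin l → ι) → (Fin l' → ι))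
    (p : PolyH K ι l) :
    evalP X (Finsupp.mapDomain f p) =
      Finsupp.linearCombination K
        (fun w : Fin l → ι => (List.ofFn fun k => X (f w k)).prod) p := by
  rw [evalP_eq, Finsupp.linearCombination_mapDomain]; rfl

lemma evalP_consP {l : ℕ} (X : ι → A) (i : ι) (p : PolyH K ι l) :
    evalP X (consP i p) = X i * evalP X p := by
  rw [consP, Finsupp.lmapDomain_apply, evalP_mapDomain, evalP_eq]
  simp only [Finsupp.linearCombination_apply]
  rw [Finsupp.mul_sum]
  refine Finsupp.sum_congr fun w _ => ?_
  rw [List.ofFn_succ]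
  simp [mul_smul_comm]

lemma evalP_snocP {l : ℕ} (X : ι → A) (i : ι) (p : PolyH K ι l) :
    evalP X (snocP i p) = evalP X p * X i := by
  rw [snocP, Finsupp.lmapDomain_apply, evalP_mapDomain, evalP_eq]
  simp only [Finsupp.linearCombination_apply]
  rw [Finsupp.sum_mul]
  refine Finsupp.sum_congr fun w _ => ?_
  rw [List.ofFn_succ']
  simp [smul_mul_assoc]

end AuxEval

lemma rotP_consP {l : ℕ} (i : ι) (p : PolyH K ι l) :
    rotP (consP i p) = snocP i p := by
  rw [rotP, consP, snocP, Finsupp.lmapDomain_apply, Finsupp.lmapDomain_apply,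
    Finsupp.lmapDomain_apply, ← Finsupp.mapDomain_comp]
  refine Finsupp.mapDomain_congr fun w _ => ?_
  funext k
  refine Fin.lastCases ?_ (fun j => ?_) k
  · simp [finRotate_succ_apply, Function.comp]
  · simp only [Function.comp_apply, finRotate_succ_apply, Fin.snoc_castSucc]
    rw [Fin.coeSucc_eq_succ, Fin.cons_succ]

open scoped Fin.NatCast Fin.CommRing in
lemma rotP_pow_apply {m : ℕ} [NeZero m] (n : ℕ) (α : PolyH K ι m) :
    ((rotP : Module.End K (PolyH K ι m)) ^ n) α =
      Finsupp.mapDomain (fun w k => w (k + (n : Fin m))) α := by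
  obtain ⟨m, rfl⟩ := Nat.exists_eq_succ_of_ne_zero (NeZero.ne m)
  induction n with
  | zero =>
      have h : (fun (w : Fin m.succ → ι) (k : Fin m.succ) => w (k + ((0 : ℕ) : Fin m.succ)))
          = id := by funext w k; simp
      rw [pow_zero, h, Finsupp.mapDomain_id]; rfl
  | succ n ih =>
      rw [pow_succ', Module.End.mul_apply, ih, rotP, Finsupp.lmapDomain_apply,
        ← Finsupp.mapDomain_comp]
      refine Finsupp.mapDomain_congr fun w _ => ?_
      funext k
      simp only [Function.comp_apply, finRotate_succ_apply]
      congr 1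
      push_cast
      ring

open scoped Fin.NatCast Fin.CommRing in
lemma rotP_pow_card {m : ℕ} [NeZero m] :
    (rotP : Module.End K (PolyH K ι m)) ^ m = 1 := by
  apply LinearMap.ext; intro α
  rw [rotP_pow_apply]
  have h : (fun (w : Fin m → ι) (k : Fin m) => w (k + (m : Fin m))) = id := by
    funext w k; simp
  rw [h, Finsupp.mapDomain_id]; rfl

lemma addRightCancel' {M : Type*} [AddGroup M] {a b c : M} (h : a + c = b + c) : a = b :=
  add_right_cancel h

lemma rotP_NP {m : ℕ} [NeZero m] :
    (rotP : Module.End K (PolyH K ι m)) * NP = NP := by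
  rw [NP, Finset.mul_sum]
  simp_rw [← pow_succ']
  have h1 := Finset.sum_range_succ' (fun r => (rotP : Module.End K (PolyH K ι m)) ^ r) m
  have h2 := Finset.sum_range_succ (fun r => (rotP : Module.End K (PolyH K ι m)) ^ r) m
  rw [rotP_pow_card] at h2
  rw [pow_zero] at h1
  have h := h1.symm.trans h2
  exact addRightCancel' h


open TrivSqZeroExt in
/-- Let `A` be an associative `K`-algebra, `α ∈ V^{⊗(l+2)}`
(a noncommutative homogeneous polynomial in `x = 0` and `y = 1`), and write
`N(α) = x ⊗ p_α - y ⊗ q_α` for the trace `N(α) = Σ_{r<l+2} σ^r(α)` of the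
cyclic action.  Then for all `X, Y ∈ A`, in the algebra `A[ε]` of dual numbers
one has `[X - ε q_α(X,Y), Y - ε p_α(X,Y)] = [X, Y]`; i.e. the vector field
`F_α(X,Y) = (X - ε q_α(X,Y), Y - ε p_α(X,Y))` is tangent to the fibers of the
commutator map. -/
theorem Falpha_tangent_to_commutator_fibers
    {K : Type*} [Field K] {A : Type*} [Ring A] [Algebra K A]
    (l : ℕ) (α : PolyH K (Fin 2) (l + 2))
    (p q : PolyH K (Fin 2) (l + 1))
    (hpq : NP α = consP 0 p - consP 1 q)
    (X Y : A) :
    ((inl X : DualNumber A) - DualNumber.eps * inl (evalP ![X, Y] q)) *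
        ((inl Y : DualNumber A) - DualNumber.eps * inl (evalP ![X, Y] p)) -
      ((inl Y : DualNumber A) - DualNumber.eps * inl (evalP ![X, Y] p)) *
        ((inl X : DualNumber A) - DualNumber.eps * inl (evalP ![X, Y] q)) =
    (inl X : DualNumber A) * inl Y - (inl Y : DualNumber A) * inl X := by
  have hN : NP α = snocP 0 p - snocP 1 q := by
    calc NP α = rotP (NP α) := by
          conv_lhs => rw [← rotP_NP (m := l + 2) (K := K) (ι := Fin 2)]
          exact Module.End.mul_apply _ _ _
        _ = snocP 0 p - snocP 1 q := by rw [hpq, map_sub, rotP_consP, rotP_consP]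
  have e1 := congrArg (evalP (![X, Y] : Fin 2 → A)) (hpq.symm.trans hN)
  simp only [evalP_sub, evalP_consP, evalP_snocP, Matrix.cons_val_zero,
    Matrix.cons_val_one, Matrix.head_cons] at e1
  set P := evalP (![X, Y] : Fin 2 → A) p
  set Q := evalP (![X, Y] : Fin 2 → A) q
  apply TrivSqZeroExt.ext
  · simp
  · simp [TrivSqZeroExt.snd_mul]
    have e2 := sub_eq_sub_iff_add_eq_add.mp e1
    calc -(X * P) + -(Q * Y) - (-(Y * Q) + -(P * X))
        = (Y * Q + P * X) - (X * P + Q * Y) := by abel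
      _ = 0 := by rw [e2]; abel

end
end

section
/- Let V have basis {x₁, …, x_r}, identify V^⊗l with noncommutative homogeneous polynomials of degree l in x₁, …, x_r, and let p ∈ ⊕_l P_{l,−}. Let J be the matrix of a nondegenerate alternating bilinear form on K^n and let sp_n = {X ∈ gl_n : JX = −XᵗJ} be the corresponding symplectic Lie algebra. Then for all X₁, …, X_r ∈ sp_n, the evaluation p(X₁, …, X_r) again lies in sp_n. -/
/-!
We identify the tensor algebra `⊕_l V^{⊗l}` of a vector space `V` with
distinguished basis `{x₁, …, x_r}` with the space of noncommutative
polynomials in `x₁, …, x_r`, i.e. with formal `K`-linear combinations of words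
in the alphabet `Fin r`.  The involution `ι` acts on the `l`-th homogeneous
component by `ι(α₁ ⊗ ⋯ ⊗ α_l) = (-1)^l α_l ⊗ ⋯ ⊗ α₁`, and
`⊕_l P_{l,-}`, the sum of its `-1`-eigenspaces, is exactly the set of `p` with
`ι(p) = -p`.
-/

noncomputable section

/-- Noncommutative polynomials in variables `ι` over `K`: formal `K`-linear
combinations of words; the degree-`l` homogeneous part is `V^{⊗l}`. -/
abbrev NCPoly (K : Type*) [Field K] (ι : Type*) : Type _ := List ι →₀ K

variable {K : Type*} [Field K] {ι : Type*}

/-- The involution `ι(α₁ ⊗ ⋯ ⊗ α_l) = (-1)^l · α_l ⊗ ⋯ ⊗ α₁`, extended to all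
of the tensor algebra. -/
def iotaN (p : NCPoly K ι) : NCPoly K ι :=
  p.sum fun w c => Finsupp.single w.reverse ((-1 : K) ^ w.length * c)

/-- Evaluation of a noncommutative polynomial at the tuple `X` of elements of
an associative `K`-algebra `A` (substitution and multiplication). -/
def evalN {A : Type*} [Ring A] [Algebra K A] (X : ι → A) (p : NCPoly K ι) : A :=
  p.sum fun w c => c • (w.map X).prod

open Matrix in
/-- Let `p ∈ ⊕_l P_{l,-}` be a noncommutative polynomial in
`x₁, …, x_r` all of whose homogeneous components lie in the `-1`-eigenspace of
the involution `ι` (i.e. `ι(p) = -p`).  Let `J` be the matrix of a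
nondegenerate alternating bilinear form on `K^n`, and let
`𝔰𝔭_n = {X : J * X = -Xᵀ * J}`.  Then for all `X₁, …, X_r ∈ 𝔰𝔭_n`, the
evaluation `p(X₁, …, X_r)` again lies in `𝔰𝔭_n`. -/
theorem eval_mem_sp
    {K : Type*} [Field K] (r n : ℕ)
    (p : NCPoly K (Fin r)) (hp : iotaN p = -p)
    (J : Matrix (Fin n) (Fin n) K)
    (hJalt : ∀ v : Fin n → K, v ⬝ᵥ J.mulVec v = 0) (hJnd : IsUnit J)
    (X : Fin r → Matrix (Fin n) (Fin n) K)
    (hX : ∀ i, J * X i = -(X i)ᵀ * J) :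
    J * evalN X p = -(evalN X p)ᵀ * J := by
  set T : NCPoly K (Fin r) →ₗ[K] Matrix (Fin n) (Fin n) K :=
    Finsupp.linearCombination K (fun w : List (Fin r) => (w.map X).prod) with hT
  have hTeval : ∀ q : NCPoly K (Fin r), evalN X q = T q := by
    intro q; rw [hT, Finsupp.linearCombination_apply]; rfl
  have key : ∀ w : List (Fin r),
      ((w.map X).prod)ᵀ * J = ((-1 : K) ^ w.length) • (J * (w.reverse.map X).prod) := by
    intro w
    induction w with
    | nil => simp
    | cons i w ih =>
      have hXi : (X i)ᵀ * J = -(J * X i) := by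
        rw [hX i, neg_mul, neg_neg]
      calc (((i :: w).map X).prod)ᵀ * J
          = (w.map X).prodᵀ * ((X i)ᵀ * J) := by
            simp [Matrix.transpose_mul, Matrix.mul_assoc]
        _ = -((w.map X).prodᵀ * J * X i) := by rw [hXi]; simp [Matrix.mul_assoc]
        _ = -(((-1 : K) ^ w.length • (J * (w.reverse.map X).prod)) * X i) := by rw [ih]
        _ = ((-1 : K) ^ (i :: w).length) • (J * (((i :: w).reverse).map X).prod) := by
            simp [pow_succ, Matrix.smul_mul, Matrix.mul_assoc, mul_comm]
  -- evalN of iotaN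
  have hiota : T (iotaN p) =
      p.sum fun w c => ((-1 : K) ^ w.length * c) • ((w.reverse.map X).prod) := by
    rw [iotaN, map_finsuppSum]
    exact Finsupp.sum_congr fun w _ => by simp only [hT, Finsupp.linearCombination_single]
  have h1 : (T p)ᵀ * J = J * T (iotaN p) := by
    rw [hiota, hT, Finsupp.linearCombination_apply, Finsupp.sum, Finsupp.sum]
    rw [Matrix.transpose_sum, Finset.sum_mul, Finset.mul_sum]
    refine Finset.sum_congr rfl fun w _ => ?_
    rw [Matrix.transpose_smul, Matrix.smul_mul, key w]
    rw [smul_smul, Matrix.mul_smul, mul_comm]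
  have h2 : T (iotaN p) = -T p := by rw [hp, map_neg]
  rw [hTeval, neg_mul, h1, h2, Matrix.mul_neg, neg_neg]

end
end
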